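/- arXiv:2010.12700 — 8 statements merged into one kernel-verified Lean document; each statement's English description precedes it below -/
import Mathlib

section
/- There is an absolute constant C > 0 such that for every 2π-periodic continuously differentiable function g : ℝ → ℝ with g(0) = 0, one has ∫_{-π}^{π} g(x)²/sin²(x/2) dx ≤ C ∫_{-π}^{π} g'(x)² dx. -/
open Real MeasureTheory intervalIntegral

-- derivative of F
lemma hasDerivF (g : ℝ → ℝ) (hg : ContDiff ℝ 1 g) (x : ℝ) (hs : Real.sin (x/2) ≠ 0) :
    HasDerivAt (fun y => -2 * (g y)^2 * (Real.cos (y/2) / Real.sin (y/2)))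
      ((g x)^2 / (Real.sin (x/2))^2
        - 4 * g x * deriv g x * (Real.cos (x/2) / Real.sin (x/2))) x := by
  have hgx : HasDerivAt g (deriv g x) x := ((hg.differentiable one_ne_zero) x).hasDerivAt
  have hg2 : HasDerivAt (fun y => (g y)^2) (2 * g x * deriv g x) x := by
    simpa [mul_comm, mul_assoc] using hgx.fun_pow 2
  have hhalf : HasDerivAt (fun y : ℝ => y / 2) (1/2 : ℝ) x := by
    simpa using (hasDerivAt_id x).div_const 2
  have hcos : HasDerivAt (fun y : ℝ => Real.cos (y/2)) (-Real.sin (x/2) * (1/2)) x :=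
    by have := (Real.hasDerivAt_cos (x/2)).comp x hhalf; exact this
  have hsin : HasDerivAt (fun y : ℝ => Real.sin (y/2)) (Real.cos (x/2) * (1/2)) x :=
    by have := (Real.hasDerivAt_sin (x/2)).comp x hhalf; exact this
  have hcot : HasDerivAt (fun y : ℝ => Real.cos (y/2) / Real.sin (y/2))
      (-(1/2) / (Real.sin (x/2))^2) x := by
    have := hcos.div hsin hs
    have hnum : -Real.sin (x/2) * (1/2) * Real.sin (x/2)
        - Real.cos (x/2) * (Real.cos (x/2) * (1/2)) = -(1/2) := by
      linear_combination (-(1/2) : ℝ) * Real.sin_sq_add_cos_sq (x/2)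
    rw [hnum] at this
    exact this
  have := (hg2.const_mul (-2 : ℝ)).fun_mul hcot
  refine this.congr_deriv ?_
  ring

set_option maxHeartbeats 1000000 in
lemma key (g : ℝ → ℝ) (hg : ContDiff ℝ 1 g) (h0 : g 0 = 0) :
    (∫ x in (0:ℝ)..π, (g x)^2 / (Real.sin (x/2))^2)
      ≤ 16 * ∫ x in (0:ℝ)..π, (deriv g x)^2 := by
  have hgc : Continuous g := hg.continuous
  have hg'c : Continuous (deriv g) := hg.continuous_deriv le_rfl
  set f : ℝ → ℝ := fun x => (g x)^2 / (Real.sin (x/2))^2 with hf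
  -- bound on deriv
  obtain ⟨K, hK⟩ := (isCompact_Icc (a := (0:ℝ)) (b := π)).exists_bound_of_continuousOn
    hg'c.continuousOn
  have hK0 : 0 ≤ K := le_trans (norm_nonneg _) (hK 0 ⟨le_refl 0, Real.pi_pos.le⟩)
  -- |g x| ≤ K * x on [0, π]
  have hgb : ∀ x ∈ Set.Icc (0:ℝ) π, |g x| ≤ K * x := by
    intro x hx
    have hfund : ∫ t in (0:ℝ)..x, deriv g t = g x - g 0 :=
      intervalIntegral.integral_deriv_eq_sub (fun t _ => (hg.differentiable one_ne_zero) t)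
        (hg'c.intervalIntegrable 0 x)
    rw [h0, sub_zero] at hfund
    rw [← hfund]
    have := intervalIntegral.norm_integral_le_of_norm_le_const (C := K)
      (f := deriv g) (a := 0) (b := x) (fun t ht => by
        apply hK
        rw [Set.uIoc_of_le hx.1] at ht
        exact ⟨ht.1.le, ht.2.trans hx.2⟩)
    simpa [abs_of_nonneg hx.1] using this
  -- sin lower bound
  have hsin : ∀ x : ℝ, 0 < x → x ≤ π → x / π ≤ Real.sin (x / 2) := by
    intro x hx hx'
    simpa using Real.mul_le_sin (x := x / 2) (by positivity) (by linarith)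
  -- pointwise bound for f on [0, π]
  have hfb : ∀ x ∈ Set.Icc (0:ℝ) π, f x ≤ π^2 * K^2 ∧ 0 ≤ f x := by
    intro x hx
    constructor
    · rcases eq_or_lt_of_le hx.1 with h | h
      · simp [hf, ← h, h0]
        positivity
      · have hs := hsin x h hx.2
        have hs0 : 0 < Real.sin (x/2) := lt_of_lt_of_le (by positivity) hs
        have h1 : (g x)^2 ≤ K^2 * x^2 := by
          have := hgb x hx
          nlinarith [abs_nonneg (g x), sq_abs (g x)]
        have hxp : (0:ℝ) ≤ x / π := by positivity
        have h2 : (x / π)^2 ≤ (Real.sin (x/2))^2 := pow_le_pow_left₀ hxp hs 2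
        rw [hf, div_le_iff₀ (by positivity)]
        calc (g x)^2 ≤ K^2 * x^2 := h1
          _ = π^2 * K^2 * (x/π)^2 := by field_simp
          _ ≤ π^2 * K^2 * (Real.sin (x/2))^2 :=
              mul_le_mul_of_nonneg_left h2 (by positivity)
    · positivity
  -- f integrable on any subinterval of [0, π]
  have hfm : AEStronglyMeasurable f volume := by
    apply Measurable.aestronglyMeasurable
    exact ((hgc.pow 2).measurable).div ((Real.continuous_sin.comp
      (continuous_id.div_const 2)).pow 2).measurable
  have hfi : ∀ a b : ℝ, a ∈ Set.Icc (0:ℝ) π → b ∈ Set.Icc (0:ℝ) π →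
      IntervalIntegrable f volume a b := by
    intro a b ha hb
    rw [intervalIntegrable_iff]
    apply Measure.integrableOn_of_bounded (M := π^2 * K^2) measure_Ioc_lt_top.ne hfm
    rw [ae_restrict_iff' measurableSet_Ioc]
    filter_upwards with x hx
    have hx' : x ∈ Set.Icc (0:ℝ) π :=
      ⟨(le_min ha.1 hb.1).trans hx.1.le, hx.2.trans (max_le ha.2 hb.2)⟩
    have := hfb x hx'
    rw [Real.norm_eq_abs, abs_of_nonneg this.2]
    exact this.1
  set J := ∫ x in (0:ℝ)..π, (deriv g x)^2 with hJ
  have hpi : (0:ℝ) < π := Real.pi_pos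
  -- main estimate for each ε ∈ (0, π]
  have main : ∀ ε : ℝ, 0 < ε → ε ≤ π →
      (∫ x in (0:ℝ)..π, f x) ≤ 16 * J + (π^2 + 4*π) * K^2 * ε := by
    intro ε hε hεπ
    have hεmem : ε ∈ Set.Icc (0:ℝ) π := ⟨hε.le, hεπ⟩
    have h0mem : (0:ℝ) ∈ Set.Icc (0:ℝ) π := ⟨le_refl 0, hpi.le⟩
    have hπmem : π ∈ Set.Icc (0:ℝ) π := ⟨hpi.le, le_refl π⟩
    -- sin positive on [ε, π]
    have hsp : ∀ x ∈ Set.Icc ε π, 0 < Real.sin (x/2) := by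
      intro x hx
      have hx0 : 0 < x := hε.trans_le hx.1
      exact lt_of_lt_of_le (div_pos hx0 hpi) (hsin x hx0 hx.2)
    -- split the integral
    have hsplit : (∫ x in (0:ℝ)..π, f x)
        = (∫ x in (0:ℝ)..ε, f x) + ∫ x in ε..π, f x :=
      (intervalIntegral.integral_add_adjacent_intervals
        (hfi 0 ε h0mem hεmem) (hfi ε π hεmem hπmem)).symm
    -- small piece bound
    have hsmall : (∫ x in (0:ℝ)..ε, f x) ≤ π^2 * K^2 * ε := by
      have := intervalIntegral.norm_integral_le_of_norm_le_const
        (C := π^2 * K^2) (f := f) (a := 0) (b := ε) (fun x hx => by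
          rw [Set.uIoc_of_le hε.le] at hx
          have hx' : x ∈ Set.Icc (0:ℝ) π := ⟨hx.1.le, hx.2.trans hεπ⟩
          rw [Real.norm_eq_abs, abs_of_nonneg (hfb x hx').2]
          exact (hfb x hx').1)
      rw [sub_zero, abs_of_nonneg hε.le] at this
      calc (∫ x in (0:ℝ)..ε, f x) ≤ ‖∫ x in (0:ℝ)..ε, f x‖ := le_abs_self _
        _ ≤ π^2 * K^2 * ε := this
    -- FTC on [ε, π]
    set F : ℝ → ℝ := fun y => -2 * (g y)^2 * (Real.cos (y/2) / Real.sin (y/2)) with hF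
    set G : ℝ → ℝ := fun x => 4 * g x * deriv g x * (Real.cos (x/2) / Real.sin (x/2)) with hG
    have hGcont : ContinuousOn G (Set.Icc ε π) := by
      apply ContinuousOn.mul
      · exact (continuous_const.mul hgc).continuousOn.mul hg'c.continuousOn
      · exact ContinuousOn.div
          (Real.continuous_cos.comp (continuous_id.div_const 2)).continuousOn
          (Real.continuous_sin.comp (continuous_id.div_const 2)).continuousOn
          (fun x hx => (hsp x hx).ne')
    have hGint : IntervalIntegrable G volume ε π := by
      apply ContinuousOn.intervalIntegrable
      rwa [Set.uIcc_of_le hεπ]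
    have hFTC : (∫ x in ε..π, (f x - G x)) = F π - F ε := by
      apply intervalIntegral.integral_eq_sub_of_hasDerivAt
      · intro x hx
        rw [Set.uIcc_of_le hεπ] at hx
        exact hasDerivF g hg x (hsp x hx).ne'
      · exact ((hfi ε π hεmem hπmem).sub hGint)
    have hIG : (∫ x in ε..π, f x) = (∫ x in ε..π, G x) + (F π - F ε) := by
      rw [← hFTC, intervalIntegral.integral_sub (hfi ε π hεmem hπmem) hGint]
      ring
    -- F π = 0
    have hFπ : F π = 0 := by
      simp [hF, Real.cos_pi_div_two]
    -- boundary term bound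
    have hFε : -F ε ≤ 2 * π * K^2 * ε := by
      have hs := hsin ε hε hεπ
      have hs0 : 0 < Real.sin (ε/2) := hsp ε ⟨le_refl ε, hεπ⟩
      have hc1 : Real.cos (ε/2) ≤ 1 := Real.cos_le_one _
      have hc0 : 0 ≤ Real.cos (ε/2) :=
        Real.cos_nonneg_of_mem_Icc ⟨by linarith, by linarith⟩
      have h1 : (g ε)^2 ≤ K^2 * ε^2 := by
        have := hgb ε hεmem
        nlinarith [abs_nonneg (g ε), sq_abs (g ε)]
      have hcs : Real.cos (ε/2) / Real.sin (ε/2) ≤ π / ε := by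
        rw [div_le_div_iff₀ hs0 hε]
        have h4 : ε ≤ Real.sin (ε/2) * π := (div_le_iff₀ hpi).mp hs
        nlinarith [hε, hc1]
      have hcs0 : 0 ≤ Real.cos (ε/2) / Real.sin (ε/2) := div_nonneg hc0 hs0.le
      have : -F ε = 2 * (g ε)^2 * (Real.cos (ε/2) / Real.sin (ε/2)) := by
        simp only [hF]
        ring
      rw [this]
      calc 2 * (g ε)^2 * (Real.cos (ε/2) / Real.sin (ε/2))
          ≤ 2 * (K^2 * ε^2) * (π / ε) := by
            apply mul_le_mul (by nlinarith) hcs hcs0 (by positivity)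
        _ = 2 * π * K^2 * ε := by field_simp
    -- pointwise Young bound and integral comparison
    have hGle : (∫ x in ε..π, G x)
        ≤ (1/2) * (∫ x in ε..π, f x) + 8 * ∫ x in ε..π, (deriv g x)^2 := by
      have hfhalf : IntervalIntegrable (fun x => (1/2) * f x) volume ε π :=
        (hfi ε π hεmem hπmem).const_mul _
      have hd2 : IntervalIntegrable (fun x => 8 * (deriv g x)^2) volume ε π :=
        ((continuous_const.mul (hg'c.pow 2)).intervalIntegrable ε π)
      have hmono : (∫ x in ε..π, G x)
          ≤ ∫ x in ε..π, ((1/2) * f x + 8 * (deriv g x)^2) := by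
        apply intervalIntegral.integral_mono_on hεπ hGint (hfhalf.add hd2)
        intro x hx
        have hs0 : 0 < Real.sin (x/2) := hsp x hx
        set s := Real.sin (x/2)
        set c := Real.cos (x/2)
        have hc1 : c^2 ≤ 1 := by
          have := Real.sin_sq_add_cos_sq (x/2)
          nlinarith [sq_nonneg (Real.sin (x/2))]
        have hrw : (1/2) * f x + 8 * (deriv g x)^2 - G x
            = ((1/2) * (g x)^2 + 8 * (deriv g x)^2 * s^2
                - 4 * g x * deriv g x * c * s) / s^2 := by
          have hsne : s ≠ 0 := hs0.ne'
          simp only [hf, hG]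
          rw [show Real.sin (x/2) = s from rfl, show Real.cos (x/2) = c from rfl]
          field_simp
        have hnum : 0 ≤ (1/2) * (g x)^2 + 8 * (deriv g x)^2 * s^2
            - 4 * g x * deriv g x * c * s := by
          nlinarith [sq_nonneg (g x * c - 4 * deriv g x * s), sq_nonneg (g x), hc1]
        have := div_nonneg hnum (sq_nonneg s)
        linarith [hrw ▸ this]
      calc (∫ x in ε..π, G x)
          ≤ ∫ x in ε..π, ((1/2) * f x + 8 * (deriv g x)^2) := hmono
        _ = (1/2) * (∫ x in ε..π, f x) + 8 * ∫ x in ε..π, (deriv g x)^2 := by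
            rw [intervalIntegral.integral_add hfhalf hd2,
              intervalIntegral.integral_const_mul, intervalIntegral.integral_const_mul]
    -- tail of J
    have hJε : (∫ x in ε..π, (deriv g x)^2) ≤ J := by
      have hadd : (∫ x in (0:ℝ)..ε, (deriv g x)^2) + (∫ x in ε..π, (deriv g x)^2) = J :=
        intervalIntegral.integral_add_adjacent_intervals
          ((hg'c.pow 2).intervalIntegrable 0 ε)
          ((hg'c.pow 2).intervalIntegrable ε π)
      have hpos : 0 ≤ ∫ x in (0:ℝ)..ε, (deriv g x)^2 :=
        intervalIntegral.integral_nonneg hε.le (fun x _ => sq_nonneg _)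
      linarith
    -- combine
    have hIε : (∫ x in ε..π, f x) ≤ 16 * J + 4 * π * K^2 * ε := by
      have := hIG
      rw [hFπ] at this
      have h2 : (∫ x in ε..π, f x) ≤ (1/2) * (∫ x in ε..π, f x) + 8 * J
          + 2 * π * K^2 * ε := by
        have h3 : (∫ x in ε..π, (deriv g x)^2) ≤ J := hJε
        linarith [hGle, hFε, this]
      linarith
    rw [hsplit]
    nlinarith [hsmall, hIε, sq_nonneg K, hpi]
  -- conclude by letting ε → 0
  have : (∫ x in (0:ℝ)..π, f x) ≤ 16 * J := by
    apply le_of_forall_pos_le_add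
    intro δ hδ
    set c := (π^2 + 4*π) * K^2 with hc
    have hc0 : 0 ≤ c := by positivity
    set ε := min π (δ / (c + 1)) with hε
    have hε0 : 0 < ε := lt_min hpi (by positivity)
    have hεπ : ε ≤ π := min_le_left _ _
    have := main ε hε0 hεπ
    have hεδ : c * ε ≤ δ := by
      have h1 : ε ≤ δ / (c + 1) := min_le_right _ _
      have h2 : c * ε ≤ c * (δ / (c + 1)) := by nlinarith
      have h3 : c * (δ / (c + 1)) ≤ δ := by
        rw [mul_div_assoc']
        rw [div_le_iff₀ (by positivity)]
        nlinarith
      linarith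
    linarith
  exact this

-- integrability lemma (same argument as inside key, extracted)
lemma fint (g : ℝ → ℝ) (hg : ContDiff ℝ 1 g) (h0 : g 0 = 0) :
    IntervalIntegrable (fun x => (g x)^2 / (Real.sin (x/2))^2) volume 0 π := by
  have hgc : Continuous g := hg.continuous
  have hg'c : Continuous (deriv g) := hg.continuous_deriv le_rfl
  obtain ⟨K, hK⟩ := (isCompact_Icc (a := (0:ℝ)) (b := π)).exists_bound_of_continuousOn
    hg'c.continuousOn
  have hK0 : 0 ≤ K := le_trans (norm_nonneg _) (hK 0 ⟨le_refl 0, Real.pi_pos.le⟩)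
  have hgb : ∀ x ∈ Set.Icc (0:ℝ) π, |g x| ≤ K * x := by
    intro x hx
    have hfund : ∫ t in (0:ℝ)..x, deriv g t = g x - g 0 :=
      intervalIntegral.integral_deriv_eq_sub (fun t _ => (hg.differentiable one_ne_zero) t)
        (hg'c.intervalIntegrable 0 x)
    rw [h0, sub_zero] at hfund
    rw [← hfund]
    have := intervalIntegral.norm_integral_le_of_norm_le_const (C := K)
      (f := deriv g) (a := 0) (b := x) (fun t ht => by
        apply hK
        rw [Set.uIoc_of_le hx.1] at ht
        exact ⟨ht.1.le, ht.2.trans hx.2⟩)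
    simpa [abs_of_nonneg hx.1] using this
  have hsin : ∀ x : ℝ, 0 < x → x ≤ π → x / π ≤ Real.sin (x / 2) := by
    intro x hx hx'
    simpa using Real.mul_le_sin (x := x / 2) (by positivity) (by linarith)
  have hfb : ∀ x ∈ Set.Icc (0:ℝ) π, (g x)^2 / (Real.sin (x/2))^2 ≤ π^2 * K^2
      ∧ 0 ≤ (g x)^2 / (Real.sin (x/2))^2 := by
    intro x hx
    constructor
    · rcases eq_or_lt_of_le hx.1 with h | h
      · simp [← h, h0]
        positivity
      · have hs := hsin x h hx.2
        have hs0 : 0 < Real.sin (x/2) := lt_of_lt_of_le (by positivity) hs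
        have h1 : (g x)^2 ≤ K^2 * x^2 := by
          have := hgb x hx
          nlinarith [abs_nonneg (g x), sq_abs (g x)]
        have hxp : (0:ℝ) ≤ x / π := by positivity
        have h2 : (x / π)^2 ≤ (Real.sin (x/2))^2 := pow_le_pow_left₀ hxp hs 2
        rw [div_le_iff₀ (by positivity)]
        calc (g x)^2 ≤ K^2 * x^2 := h1
          _ = π^2 * K^2 * (x/π)^2 := by field_simp
          _ ≤ π^2 * K^2 * (Real.sin (x/2))^2 :=
              mul_le_mul_of_nonneg_left h2 (by positivity)
    · positivity
  have hfm : AEStronglyMeasurable (fun x => (g x)^2 / (Real.sin (x/2))^2) volume := by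
    apply Measurable.aestronglyMeasurable
    exact ((hgc.pow 2).measurable).div ((Real.continuous_sin.comp
      (continuous_id.div_const 2)).pow 2).measurable
  rw [intervalIntegrable_iff]
  apply Measure.integrableOn_of_bounded (M := π^2 * K^2) measure_Ioc_lt_top.ne hfm
  rw [ae_restrict_iff' measurableSet_Ioc]
  filter_upwards with x hx
  have hx' : x ∈ Set.Icc (0:ℝ) π :=
    ⟨(le_min le_rfl Real.pi_pos.le).trans hx.1.le,
      hx.2.trans (max_le Real.pi_pos.le le_rfl)⟩
  rw [Real.norm_eq_abs, abs_of_nonneg (hfb x hx').2]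
  exact (hfb x hx').1

theorem stmt2 : ∃ C : ℝ, 0 < C ∧
    ∀ g : ℝ → ℝ, Function.Periodic g (2 * π) → ContDiff ℝ 1 g → g 0 = 0 →
      (∫ x in (-π)..π, (g x) ^ 2 / (Real.sin (x / 2)) ^ 2)
        ≤ C * ∫ x in (-π)..π, (deriv g x) ^ 2 := by
  refine ⟨16, by norm_num, ?_⟩
  intro g _ hg h0
  have hg'c : Continuous (deriv g) := hg.continuous_deriv le_rfl
  -- reflected function
  set h : ℝ → ℝ := fun x => g (-x) with hh
  have hhc : ContDiff ℝ 1 h := hg.comp (contDiff_id.neg)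
  have hh0 : h 0 = 0 := by simp [hh, h0]
  have hderh : ∀ x, deriv h x = -deriv g (-x) := fun x => deriv_comp_neg g x
  -- f for g and h
  have hEq : (fun x => (h x)^2 / (Real.sin (x/2))^2)
      = fun x => (g (-x))^2 / (Real.sin ((-x)/2))^2 := by
    funext x
    rw [hh]
    have : Real.sin (-x/2) = -Real.sin (x/2) := by
      rw [neg_div, Real.sin_neg]
    rw [this]
    ring_nf
  -- negative-side integrals via substitution
  have hneg1 : (∫ x in (-π)..(0:ℝ), (g x)^2 / (Real.sin (x/2))^2)
      = ∫ x in (0:ℝ)..π, (h x)^2 / (Real.sin (x/2))^2 := by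
    rw [hEq, intervalIntegral.integral_comp_neg
      (fun x => (g x)^2 / (Real.sin (x/2))^2) (a := 0) (b := π)]
    norm_num
  have hneg2 : (∫ x in (-π)..(0:ℝ), (deriv g x)^2)
      = ∫ x in (0:ℝ)..π, (deriv h x)^2 := by
    have : (fun x => (deriv h x)^2) = fun x => (deriv g (-x))^2 := by
      funext x; rw [hderh]; ring
    rw [this, intervalIntegral.integral_comp_neg
      (fun x => (deriv g x)^2) (a := 0) (b := π)]
    norm_num
  -- integrability for splitting
  have hintg : IntervalIntegrable (fun x => (g x)^2 / (Real.sin (x/2))^2) volume 0 π :=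
    fint g hg h0
  have hinth : IntervalIntegrable (fun x => (g x)^2 / (Real.sin (x/2))^2) volume (-π) 0 := by
    rw [IntervalIntegrable.iff_comp_neg]
    have := (fint h hhc hh0).symm
    rw [hEq] at this
    simpa using this
  -- split both sides
  have hsplitL : (∫ x in (-π)..π, (g x)^2 / (Real.sin (x/2))^2)
      = (∫ x in (-π)..(0:ℝ), (g x)^2 / (Real.sin (x/2))^2)
        + ∫ x in (0:ℝ)..π, (g x)^2 / (Real.sin (x/2))^2 :=
    (intervalIntegral.integral_add_adjacent_intervals hinth hintg).symm
  have hsplitR : (∫ x in (-π)..π, (deriv g x)^2)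
      = (∫ x in (-π)..(0:ℝ), (deriv g x)^2) + ∫ x in (0:ℝ)..π, (deriv g x)^2 :=
    (intervalIntegral.integral_add_adjacent_intervals
      ((hg'c.pow 2).intervalIntegrable _ _) ((hg'c.pow 2).intervalIntegrable _ _)).symm
  have k1 := key g hg h0
  have k2 := key h hhc hh0
  have e1 : (∫ x in (-π)..π, (g x)^2 / (Real.sin (x/2))^2)
      ≤ 16 * ∫ x in (-π)..π, (deriv g x)^2 := by
    rw [hsplitL, hsplitR, hneg1, hneg2]
    linarith
  exact e1
end

section
/- Let f : ℝ → ℝ be 2π-periodic and infinitely differentiable, let Hf and H(D_x f) be the circular Hilbert transforms of f and of D_x f(x) := sin(x) f'(x). Then Hf is continuously differentiable and for every x, sin(x) · (Hf)'(x) − H(D_x f)(x) = (1/(2π)) ∫_{-π}^{π} f(y) sin(y) dy. -/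
open Real MeasureTheory intervalIntegral

/-- Truncated (principal value) approximation of the circular Hilbert transform:
`(1/(2π)) ∫_{ε ≤ |x − y| ≤ π} f(y) cot((x−y)/2) dy`. -/
noncomputable def pvHilbertApprox (f : ℝ → ℝ) (x ε : ℝ) : ℝ :=
  (1 / (2 * π)) *
    ((∫ y in (x + ε)..(x + π), f y * Real.cot ((x - y) / 2)) +
     ∫ y in (x - π)..(x - ε), f y * Real.cot ((x - y) / 2))

/-- `Hf` is the circular Hilbert transform of `f`: at every point the principal value
limit of the truncated integrals exists and equals `Hf x`. -/
def IsCircHilbert (f Hf : ℝ → ℝ) : Prop :=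
  ∀ x : ℝ, Filter.Tendsto (fun ε => pvHilbertApprox f x ε)
    (nhdsWithin 0 (Set.Ioi 0)) (nhds (Hf x))

open Set Filter

noncomputable def circA (h : ℝ → ℝ) (x t : ℝ) : ℝ := (h (x - t) - h (x + t)) * Real.cot (t / 2)

lemma cot_half_bound {t : ℝ} (ht : t ∈ Set.Ioc 0 π) : |Real.cot (t / 2)| ≤ π / t := by
  have hπ := Real.pi_pos
  have hs : t / π ≤ Real.sin (t / 2) := by
    simpa using Real.mul_le_sin (x := t / 2) (by linarith [ht.1]) (by linarith [ht.2])
  have htπ : (0:ℝ) < t / π := div_pos ht.1 hπ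
  have hspos : 0 < Real.sin (t / 2) := lt_of_lt_of_le htπ hs
  rw [Real.cot_eq_cos_div_sin, abs_div, abs_of_pos hspos]
  have h1 : |Real.cos (t / 2)| ≤ 1 := Real.abs_cos_le_one _
  calc |Real.cos (t / 2)| / Real.sin (t / 2) ≤ 1 / (t / π) := by
        apply div_le_div₀ zero_le_one h1 htπ hs
    _ = π / t := one_div_div _ _

lemma cot_meas : Measurable (fun t : ℝ => Real.cot (t / 2)) := by
  have : (fun t : ℝ => Real.cot (t / 2)) = fun t => Real.cos (t/2) / Real.sin (t/2) := by
    funext t; rw [Real.cot_eq_cos_div_sin]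
  rw [this]
  exact ((Real.continuous_cos.comp (continuous_id.div_const 2)).measurable).div
    ((Real.continuous_sin.comp (continuous_id.div_const 2)).measurable)

lemma circA_meas {h : ℝ → ℝ} (hh : Continuous h) (x : ℝ) :
    Measurable (circA h x) :=
  (((hh.comp (continuous_const.sub continuous_id)).sub
    (hh.comp (continuous_const.add continuous_id))).measurable.mul cot_meas)

/-- uniform bound for `circA h x t` for `x` near `x₀`. -/
lemma circA_bound {h : ℝ → ℝ} (hh : ContDiff ℝ (⊤ : ℕ∞) h) (x₀ : ℝ) :
    ∃ C : ℝ, ∀ t ∈ Set.Ioc 0 π, ∀ x ∈ Metric.ball x₀ 1, |circA h x t| ≤ C := by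
  have hπ := Real.pi_pos
  have hd : Differentiable ℝ h := hh.differentiable (by simp)
  have hc : ContinuousOn (deriv h) (Set.Icc (x₀ - 1 - π) (x₀ + 1 + π)) :=
    ((contDiff_infty_iff_deriv.mp hh).2.continuous).continuousOn
  obtain ⟨K, hK⟩ := (isCompact_Icc).exists_bound_of_continuousOn hc
  refine ⟨2 * K * π, fun t ht x hx => ?_⟩
  have hxd : |x - x₀| < 1 := by rwa [Metric.mem_ball, Real.dist_eq] at hx
  have hmem : ∀ u ∈ Set.Icc (x - t) (x + t), u ∈ Set.Icc (x₀ - 1 - π) (x₀ + 1 + π) := by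
    intro u hu
    have := abs_lt.mp hxd
    constructor <;> [linarith [hu.1, ht.2]; linarith [hu.2, ht.2]]
  have hdiff : |h (x - t) - h (x + t)| ≤ K * (2 * t) := by
    have hconv : Convex ℝ (Set.Icc (x₀ - 1 - π) (x₀ + 1 + π)) := convex_Icc _ _
    have := hconv.norm_image_sub_le_of_norm_deriv_le
      (fun u _ => hd u) (fun u hu => hK u hu)
      (hmem (x + t) ⟨by linarith [ht.1], le_rfl⟩) (hmem (x - t) ⟨le_rfl, by linarith [ht.1]⟩)
    rw [Real.norm_eq_abs, Real.norm_eq_abs] at this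
    calc |h (x - t) - h (x + t)| ≤ K * |x - t - (x + t)| := this
      _ = K * (2 * t) := by rw [show x - t - (x + t) = -(2*t) by ring, abs_neg,
            abs_of_nonneg (by linarith [ht.1])]
  have hK0 : 0 ≤ K := le_trans (abs_nonneg _) (hK x₀ ⟨by linarith, by linarith⟩)
  have hcot := cot_half_bound ht
  calc |circA h x t| = |h (x - t) - h (x + t)| * |Real.cot (t / 2)| := abs_mul _ _
    _ ≤ (K * (2 * t)) * (π / t) := by
        exact mul_le_mul hdiff hcot (abs_nonneg _) (by nlinarith [ht.1, hK0])
    _ = 2 * K * π := by field_simp [ne_of_gt ht.1]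

lemma circA_intervalIntegrable {h : ℝ → ℝ} (hh : ContDiff ℝ (⊤ : ℕ∞) h) (x : ℝ) :
    IntervalIntegrable (circA h x) volume 0 π := by
  obtain ⟨C, hC⟩ := circA_bound hh x
  rw [intervalIntegrable_iff]
  apply Measure.integrableOn_of_bounded (M := C)
  · exact ((measure_mono Set.uIoc_subset_uIcc).trans_lt measure_Icc_lt_top).ne
  · exact (circA_meas (hh.continuous) x).aestronglyMeasurable
  · apply (ae_restrict_iff' measurableSet_uIoc).mpr
    apply ae_of_all
    intro t ht
    rw [Set.uIoc_of_le Real.pi_pos.le] at ht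
    exact hC t ht x (Metric.mem_ball_self one_pos)

lemma cot_contOn {a b : ℝ} (ha : 0 < a) (hb : b ≤ π) :
    ContinuousOn (fun t : ℝ => Real.cot (t / 2)) (Set.Icc a b) := by
  have : ∀ t ∈ Set.Icc a b, Real.sin (t / 2) ≠ 0 := by
    intro t ht
    apply ne_of_gt
    apply Real.sin_pos_of_pos_of_lt_pi (by linarith [ht.1]) (by linarith [ht.2, Real.pi_pos])
  apply ContinuousOn.congr (f := fun t => Real.cos (t/2) / Real.sin (t/2))
  · exact ContinuousOn.div (Real.continuous_cos.comp (continuous_id.div_const 2)).continuousOn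
      (Real.continuous_sin.comp (continuous_id.div_const 2)).continuousOn this
  · intro t _
    show Real.cot (t/2) = Real.cos (t/2) / Real.sin (t/2)
    rw [Real.cot_eq_cos_div_sin]

lemma pv_rewrite {h : ℝ → ℝ} (hh : Continuous h) (x : ℝ) {ε : ℝ} (hε : ε ∈ Set.Ioo 0 π) :
    pvHilbertApprox h x ε = (1 / (2 * π)) * ∫ t in ε..π, circA h x t := by
  have hcot : ContinuousOn (fun t : ℝ => Real.cot (t / 2)) (Set.Icc ε π) := cot_contOn hε.1 le_rfl
  have h1 : (∫ y in (x + ε)..(x + π), h y * Real.cot ((x - y) / 2))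
      = - ∫ t in ε..π, h (x + t) * Real.cot (t / 2) := by
    rw [← intervalIntegral.integral_comp_add_left (fun y => h y * Real.cot ((x - y) / 2)) x]
    rw [← intervalIntegral.integral_neg]
    apply intervalIntegral.integral_congr
    intro t _
    show h (x + t) * Real.cot ((x - (x + t)) / 2) = -(h (x + t) * Real.cot (t / 2))
    have e1 : (x - (x + t)) / 2 = -(t / 2) := by ring
    have e2 : Real.cot (-(t/2)) = - Real.cot (t/2) := by
      rw [Real.cot_eq_cos_div_sin, Real.cot_eq_cos_div_sin, Real.cos_neg, Real.sin_neg, div_neg]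
    rw [e1, e2]; ring
  have h2 : (∫ y in (x - π)..(x - ε), h y * Real.cot ((x - y) / 2))
      = ∫ t in ε..π, h (x - t) * Real.cot (t / 2) := by
    rw [← intervalIntegral.integral_comp_sub_left (fun y => h y * Real.cot ((x - y) / 2)) x]
    apply intervalIntegral.integral_congr
    intro t _
    show h (x - t) * Real.cot ((x - (x - t)) / 2) = h (x - t) * Real.cot (t / 2)
    have e1 : (x - (x - t)) / 2 = t / 2 := by ring
    rw [e1]
  have hi1 : IntervalIntegrable (fun t => h (x - t) * Real.cot (t / 2)) volume ε π := by
    apply ContinuousOn.intervalIntegrable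
    rw [Set.uIcc_of_le hε.2.le]
    exact ((hh.comp (continuous_const.sub continuous_id)).continuousOn).mul hcot
  have hi2 : IntervalIntegrable (fun t => h (x + t) * Real.cot (t / 2)) volume ε π := by
    apply ContinuousOn.intervalIntegrable
    rw [Set.uIcc_of_le hε.2.le]
    exact ((hh.comp (continuous_const.add continuous_id)).continuousOn).mul hcot
  rw [pvHilbertApprox, h1, h2]
  congr 1
  rw [neg_add_eq_sub, ← intervalIntegral.integral_sub hi1 hi2]
  apply intervalIntegral.integral_congr
  intro t _
  show h (x - t) * Real.cot (t/2) - h (x + t) * Real.cot (t/2) = circA h x t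
  simp only [circA]
  ring

lemma tendsto_trunc {h : ℝ → ℝ} (hh : ContDiff ℝ (⊤ : ℕ∞) h) (x : ℝ) :
    Filter.Tendsto (fun ε => pvHilbertApprox h x ε) (nhdsWithin 0 (Set.Ioi 0))
      (nhds ((1 / (2 * π)) * ∫ t in (0:ℝ)..π, circA h x t)) := by
  have hπ := Real.pi_pos
  have hint : IntegrableOn (circA h x) (Set.uIcc 0 π) volume := by
    rw [Set.uIcc_of_le hπ.le, integrableOn_Icc_iff_integrableOn_Ioc]
    have := (circA_intervalIntegrable hh x)
    rwa [intervalIntegrable_iff_integrableOn_Ioc_of_le hπ.le] at this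
  have hcont := intervalIntegral.continuousOn_primitive_interval_left (a := 0) (b := π) hint
  have h0 : (0:ℝ) ∈ Set.uIcc 0 π := Set.left_mem_uIcc
  have hCW : Filter.Tendsto (fun ε => ∫ t in ε..π, circA h x t)
      (nhdsWithin 0 (Set.uIcc 0 π)) (nhds (∫ t in (0:ℝ)..π, circA h x t)) := hcont 0 h0
  have hfilter : nhdsWithin (0:ℝ) (Set.Ioc 0 π) ≤ nhdsWithin 0 (Set.uIcc 0 π) := by
    apply nhdsWithin_mono
    rw [Set.uIcc_of_le hπ.le]
    exact Set.Ioc_subset_Icc_self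
  have hIoi : nhdsWithin (0:ℝ) (Set.Ioi 0) = nhdsWithin 0 (Set.Ioc 0 π) :=
    (nhdsWithin_Ioc_eq_nhdsGT hπ).symm
  have hT : Filter.Tendsto (fun ε => (1 / (2 * π)) * ∫ t in ε..π, circA h x t)
      (nhdsWithin 0 (Set.Ioi 0)) (nhds ((1 / (2 * π)) * ∫ t in (0:ℝ)..π, circA h x t)) := by
    apply Filter.Tendsto.const_mul
    rw [hIoi]
    exact hCW.mono_left hfilter
  apply hT.congr'
  filter_upwards [Ioo_mem_nhdsGT_of_mem (Set.left_mem_Ico.mpr hπ)] with ε hε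
  exact (pv_rewrite hh.continuous x hε).symm

lemma hasDerivAt_T {h : ℝ → ℝ} (hh : ContDiff ℝ (⊤ : ℕ∞) h) (x₀ : ℝ) :
    HasDerivAt (fun x => ∫ t in (0:ℝ)..π, circA h x t)
      (∫ t in (0:ℝ)..π, circA (deriv h) x₀ t) x₀ := by
  have hπ := Real.pi_pos
  have hh' : ContDiff ℝ (⊤ : ℕ∞) (deriv h) := (contDiff_infty_iff_deriv.mp hh).2
  obtain ⟨C, hC⟩ := circA_bound hh' x₀
  have hd : Differentiable ℝ h := hh.differentiable (by simp)
  have := intervalIntegral.hasDerivAt_integral_of_dominated_loc_of_deriv_le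
    (F := fun x t => circA h x t) (F' := fun x t => circA (deriv h) x t)
    (a := 0) (b := π) (μ := volume) (x₀ := x₀) (bound := fun _ => C)
    (Metric.ball_mem_nhds x₀ one_pos) ?_ ?_ ?_ ?_ ?_ ?_
  · exact this.2
  · filter_upwards with x
    exact (circA_meas hh.continuous x).aestronglyMeasurable
  · exact circA_intervalIntegrable hh x₀
  · exact (circA_meas hh'.continuous x₀).aestronglyMeasurable
  · apply ae_of_all
    intro t ht x hx
    rw [Set.uIoc_of_le hπ.le] at ht
    exact hC t ht x hx
  · exact intervalIntegrable_const
  · apply ae_of_all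
    intro t _ x _
    have h1 : HasDerivAt (fun x => h (x - t)) (deriv h (x - t)) x := by
      simpa [Function.comp_def] using (hd (x - t)).hasDerivAt.comp x ((hasDerivAt_id x).sub_const t)
    have h2 : HasDerivAt (fun x => h (x + t)) (deriv h (x + t)) x := by
      simpa [Function.comp_def] using (hd (x + t)).hasDerivAt.comp x ((hasDerivAt_id x).add_const t)
    simpa [circA] using ((h1.sub h2).mul_const (Real.cot (t / 2)))

lemma key_identity (x t a b : ℝ) (hs : Real.sin (t/2) ≠ 0) :
    Real.sin x * ((a - b) * Real.cot (t/2))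
      - (Real.sin (x - t) * a - Real.sin (x + t) * b) * Real.cot (t/2)
    = (Real.cos x + Real.cos (x - t)) * a + (Real.cos x + Real.cos (x + t)) * b := by
  have hpyth := Real.sin_sq_add_cos_sq (t/2)
  rw [Real.cot_eq_cos_div_sin,
    show x - t = x - 2*(t/2) by ring, show x + t = x + 2*(t/2) by ring,
    Real.sin_sub, Real.sin_add, Real.cos_sub, Real.cos_add,
    Real.sin_two_mul, Real.cos_two_mul]
  field_simp
  linear_combination (-(2 * Real.cos (t/2) * Real.sin x * (a - b))) * hpyth

lemma integral_P {f : ℝ → ℝ} (hf : ContDiff ℝ (⊤ : ℕ∞) f)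
    (hper : Function.Periodic f (2 * π)) (x : ℝ) :
    (∫ t in (0:ℝ)..π, ((Real.cos x + Real.cos (x - t)) * deriv f (x - t)
      + (Real.cos x + Real.cos (x + t)) * deriv f (x + t)))
    = ∫ y in (-π)..π, f y * Real.sin y := by
  have hπ := Real.pi_pos
  have hfc : Continuous f := hf.continuous
  have hfd : Differentiable ℝ f := hf.differentiable (by simp)
  have hf'c : Continuous (deriv f) := (contDiff_infty_iff_deriv.mp hf).2.continuous
  set S : ℝ → ℝ := fun u => Real.sin u * f u with hS
  have hSc : Continuous S := Real.continuous_sin.mul hfc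
  set P : ℝ → ℝ := fun t => (Real.cos x + Real.cos (x - t)) * deriv f (x - t)
      + (Real.cos x + Real.cos (x + t)) * deriv f (x + t) with hPdef
  set Q : ℝ → ℝ := fun t => S (x - t) + S (x + t) with hQdef
  set Φ : ℝ → ℝ := fun t => Real.cos x * f (x + t) - Real.cos x * f (x - t)
      + Real.cos (x + t) * f (x + t) - Real.cos (x - t) * f (x - t) with hΦdef
  have hPc : Continuous P := by
    apply Continuous.add
    · exact ((continuous_const.add (Real.continuous_cos.comp
        (continuous_const.sub continuous_id))).mul
        (hf'c.comp (continuous_const.sub continuous_id)))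
    · exact ((continuous_const.add (Real.continuous_cos.comp
        (continuous_const.add continuous_id))).mul
        (hf'c.comp (continuous_const.add continuous_id)))
  have hQc : Continuous Q :=
    (hSc.comp (continuous_const.sub continuous_id)).add
      (hSc.comp (continuous_const.add continuous_id))
  have hΦderiv : ∀ t : ℝ, HasDerivAt Φ (P t - Q t) t := by
    intro t
    have hfm : HasDerivAt (fun t => f (x - t)) (-deriv f (x - t)) t := by
      simpa [Function.comp_def] using (hfd (x - t)).hasDerivAt.comp t ((hasDerivAt_id t).const_sub x)
    have hfp : HasDerivAt (fun t => f (x + t)) (deriv f (x + t)) t := by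
      simpa [Function.comp_def] using (hfd (x + t)).hasDerivAt.comp t ((hasDerivAt_id t).const_add x)
    have hcm : HasDerivAt (fun t => Real.cos (x - t)) (Real.sin (x - t)) t := by
      simpa [Function.comp_def] using (Real.hasDerivAt_cos (x - t)).comp t ((hasDerivAt_id t).const_sub x)
    have hcp : HasDerivAt (fun t => Real.cos (x + t)) (-Real.sin (x + t)) t := by
      simpa [Function.comp_def] using (Real.hasDerivAt_cos (x + t)).comp t ((hasDerivAt_id t).const_add x)
    have h1 := ((hfp.const_mul (Real.cos x)).sub (hfm.const_mul (Real.cos x))).add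
      (hcp.mul hfp) |>.sub (hcm.mul hfm)
    refine h1.congr_deriv ?_
    simp only [hPdef, hQdef, hS]
    ring
  have hsplit : (∫ t in (0:ℝ)..π, P t)
      = (∫ t in (0:ℝ)..π, (P t - Q t)) + ∫ t in (0:ℝ)..π, Q t := by
    rw [← intervalIntegral.integral_add (f := fun t => P t - Q t) ((hPc.sub hQc).intervalIntegrable 0 π)
      (hQc.intervalIntegrable 0 π)]
    congr 1; funext t; ring
  have hFTC : (∫ t in (0:ℝ)..π, (P t - Q t)) = Φ π - Φ 0 :=
    intervalIntegral.integral_eq_sub_of_hasDerivAt (fun t _ => hΦderiv t)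
      ((hPc.sub hQc).intervalIntegrable 0 π)
  have hΦ0 : Φ 0 = 0 := by simp [hΦdef]
  have hΦπ : Φ π = 0 := by
    simp only [hΦdef]
    rw [Real.cos_add, Real.cos_sub, Real.cos_pi, Real.sin_pi]
    ring
  have hQint : (∫ t in (0:ℝ)..π, Q t) = ∫ u in (x - π)..(x + π), S u := by
    have e1 : (∫ t in (0:ℝ)..π, S (x - t)) = ∫ u in (x - π)..x, S u := by
      simpa using intervalIntegral.integral_comp_sub_left (a := 0) (b := π) S x
    have e2 : (∫ t in (0:ℝ)..π, S (x + t)) = ∫ u in x..(x + π), S u := by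
      simpa using intervalIntegral.integral_comp_add_left (a := 0) (b := π) S x
    have hQ1 : IntervalIntegrable (fun t => S (x - t)) volume 0 π :=
      (hSc.comp (continuous_const.sub continuous_id) :
        Continuous fun t => S (x - t)).intervalIntegrable 0 π
    have hQ2 : IntervalIntegrable (fun t => S (x + t)) volume 0 π :=
      (hSc.comp (continuous_const.add continuous_id) :
        Continuous fun t => S (x + t)).intervalIntegrable 0 π
    rw [hQdef]
    rw [intervalIntegral.integral_add hQ1 hQ2]
    rw [e1, e2]
    exact intervalIntegral.integral_add_adjacent_intervals
      (hSc.intervalIntegrable _ _) (hSc.intervalIntegrable _ _)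
  have hSper : Function.Periodic S (2 * π) := by
    intro u
    simp only [hS]
    rw [hper u, Real.sin_add_two_pi]
  have hshift : (∫ u in (x - π)..(x + π), S u) = ∫ u in (-π)..π, S u := by
    have := hSper.intervalIntegral_add_eq (x - π) (-π)
    rwa [show x - π + 2*π = x + π by ring, show -π + 2*π = π by ring] at this
  rw [hsplit, hFTC, hΦ0, hΦπ, hQint, hshift]
  simp only [hS]
  rw [sub_zero, zero_add]
  apply intervalIntegral.integral_congr
  intro u _
  ring

theorem stmt3 (f Hf HDf : ℝ → ℝ) (hper : Function.Periodic f (2 * π))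
    (hf : ContDiff ℝ (⊤ : ℕ∞) f)
    (hH : IsCircHilbert f Hf)
    (hHD : IsCircHilbert (fun x => Real.sin x * deriv f x) HDf) :
    ContDiff ℝ 1 Hf ∧
      ∀ x : ℝ, Real.sin x * deriv Hf x - HDf x
        = (1 / (2 * π)) * ∫ y in (-π)..π, f y * Real.sin y := by
  have hπ := Real.pi_pos
  have hf' : ContDiff ℝ (⊤ : ℕ∞) f := hf.of_le (by simp)
  have hfd : ContDiff ℝ (⊤ : ℕ∞) (deriv f) := (contDiff_infty_iff_deriv.mp hf').2
  have hfdd : ContDiff ℝ (⊤ : ℕ∞) (deriv (deriv f)) := (contDiff_infty_iff_deriv.mp hfd).2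
  set g : ℝ → ℝ := fun x => Real.sin x * deriv f x with hgdef
  have hg' : ContDiff ℝ (⊤ : ℕ∞) g := Real.contDiff_sin.mul hfd
  have hHf : Hf = fun x => (1/(2*π)) * ∫ t in (0:ℝ)..π, circA f x t := by
    funext x
    exact tendsto_nhds_unique (hH x) (tendsto_trunc hf' x)
  have hHDf : ∀ x, HDf x = (1/(2*π)) * ∫ t in (0:ℝ)..π, circA g x t := fun x =>
    tendsto_nhds_unique (hHD x) (tendsto_trunc hg' x)
  have hderivHf : ∀ x, HasDerivAt Hf
      ((1/(2*π)) * ∫ t in (0:ℝ)..π, circA (deriv f) x t) x := by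
    intro x
    rw [hHf]
    exact (hasDerivAt_T hf' x).const_mul _
  have hderiv_eq : deriv Hf = fun x => (1/(2*π)) * ∫ t in (0:ℝ)..π, circA (deriv f) x t :=
    funext fun x => (hderivHf x).deriv
  constructor
  · rw [contDiff_one_iff_deriv]
    refine ⟨fun x => (hderivHf x).differentiableAt, ?_⟩
    rw [hderiv_eq]
    have hdiff : Differentiable ℝ
        (fun x => (1/(2*π)) * ∫ t in (0:ℝ)..π, circA (deriv f) x t) :=
      fun x => ((hasDerivAt_T hfd x).const_mul _).differentiableAt
    exact hdiff.continuous
  · intro x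
    rw [hderiv_eq, hHDf]
    have hint1 : IntervalIntegrable (fun t => Real.sin x * circA (deriv f) x t) volume 0 π :=
      (circA_intervalIntegrable hfd x).const_mul _
    have hint2 := circA_intervalIntegrable hg' x
    have step1 : Real.sin x * ((1/(2*π)) * ∫ t in (0:ℝ)..π, circA (deriv f) x t)
        - (1/(2*π)) * ∫ t in (0:ℝ)..π, circA g x t
        = (1/(2*π)) * ∫ t in (0:ℝ)..π,
            (Real.sin x * circA (deriv f) x t - circA g x t) := by
      rw [intervalIntegral.integral_sub hint1 hint2,
        intervalIntegral.integral_const_mul]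
      ring
    rw [step1]
    have step2 : (∫ t in (0:ℝ)..π, (Real.sin x * circA (deriv f) x t - circA g x t))
        = ∫ t in (0:ℝ)..π, ((Real.cos x + Real.cos (x - t)) * deriv f (x - t)
            + (Real.cos x + Real.cos (x + t)) * deriv f (x + t)) := by
      apply intervalIntegral.integral_congr_ae
      apply ae_of_all
      intro t ht
      rw [Set.uIoc_of_le hπ.le] at ht
      have hs : Real.sin (t/2) ≠ 0 := by
        apply ne_of_gt
        exact Real.sin_pos_of_pos_of_lt_pi (by linarith [ht.1]) (by linarith [ht.2])
      simpa [circA, hgdef] using key_identity x t (deriv f (x - t)) (deriv f (x + t)) hs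
    rw [step2, integral_P hf' hper x]
end

section
/- There exist absolute constants c₁, c₂ > 0 such that for every 2π-periodic twice continuously differentiable function f : ℝ → ℝ with f(0) = 0 and ∫_{-π}^{π} f'(x)²/sin²(x/2) dx < ∞: c₁ ( ∫_{-π}^{π} f'(x)²/sin²(x/2) dx + ∫_{-π}^{π} f''(x)² cos²(x/2) dx ) ≤ ∫_{-π}^{π} f'(x)²/sin²(x/2) dx + ∫_{-π}^{π} (cos(x) f'(x) + sin(x) f''(x))² / sin²(x/2) dx ≤ c₂ ( ∫_{-π}^{π} f'(x)²/sin²(x/2) dx + ∫_{-π}^{π} f''(x)² cos²(x/2) dx ). -/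
open Real MeasureTheory intervalIntegral

/-- Pointwise upper bound. -/
lemma aux_upper (u v x : ℝ) :
    (Real.cos x * u + Real.sin x * v) ^ 2 / (Real.sin (x / 2)) ^ 2
      ≤ 2 * (u ^ 2 / (Real.sin (x / 2)) ^ 2) + 8 * (v ^ 2 * (Real.cos (x / 2)) ^ 2) := by
  set s := Real.sin (x / 2) with hs
  set c := Real.cos (x / 2) with hc
  rcases eq_or_ne s 0 with h0 | h0
  · rw [h0]
    simp only [ne_eq, OfNat.ofNat_ne_zero, not_false_eq_true, zero_pow, div_zero]
    positivity
  · have hsin : Real.sin x = 2 * s * c := by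
      have : x = 2 * (x / 2) := by ring
      rw [this, Real.sin_two_mul]
    have ha : u ^ 2 / s ^ 2 = (u / s) ^ 2 := (div_pow u s 2).symm
    set a := u / s with hadef
    have hu : u = s * a := by rw [hadef]; field_simp
    have hL : (Real.cos x * u + Real.sin x * v) ^ 2 / s ^ 2
        = (Real.cos x * a + 2 * c * v) ^ 2 := by
      rw [hu, hsin]
      field_simp
    rw [hL, ha]
    nlinarith [sq_nonneg (Real.cos x * a - 2 * c * v), Real.cos_sq_le_one x,
      sq_nonneg a, sq_nonneg (c * v), sq_nonneg (Real.cos x * a)]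

/-- Pointwise lower bound, valid when `sin (x/2) ≠ 0`. -/
lemma aux_lower (u v x : ℝ) (h0 : Real.sin (x / 2) ≠ 0) :
    4 * (v ^ 2 * (Real.cos (x / 2)) ^ 2)
      ≤ 2 * ((Real.cos x * u + Real.sin x * v) ^ 2 / (Real.sin (x / 2)) ^ 2)
        + 2 * (u ^ 2 / (Real.sin (x / 2)) ^ 2) := by
  set s := Real.sin (x / 2) with hs
  set c := Real.cos (x / 2) with hc
  have hsin : Real.sin x = 2 * s * c := by
    have : x = 2 * (x / 2) := by ring
    rw [this, Real.sin_two_mul]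
  have ha : u ^ 2 / s ^ 2 = (u / s) ^ 2 := (div_pow u s 2).symm
  set a := u / s with hadef
  have hu : u = s * a := by rw [hadef]; field_simp
  have hL : (Real.cos x * u + Real.sin x * v) ^ 2 / s ^ 2
      = (Real.cos x * a + 2 * c * v) ^ 2 := by
    rw [hu, hsin]
    field_simp
  rw [hL, ha]
  nlinarith [sq_nonneg (2 * Real.cos x * a + 2 * c * v), Real.cos_sq_le_one x,
    mul_nonneg (sub_nonneg.mpr (Real.cos_sq_le_one x)) (sq_nonneg a),
    sq_nonneg a, sq_nonneg (c * v), sq_nonneg (Real.cos x * a)]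

lemma aux_null : (volume : Measure ℝ) {x : ℝ | Real.sin (x / 2) = 0} = 0 := by
  have hsub : {x : ℝ | Real.sin (x / 2) = 0} ⊆ Set.range (fun n : ℤ => (n : ℝ) * (2 * π)) := by
    intro x hx
    rw [Set.mem_setOf_eq, Real.sin_eq_zero_iff] at hx
    obtain ⟨n, hn⟩ := hx
    exact ⟨n, by linear_combination 2 * hn⟩
  exact measure_mono_null hsub ((Set.countable_range _).measure_zero _)

theorem stmt7 : ∃ c₁ c₂ : ℝ, 0 < c₁ ∧ 0 < c₂ ∧
    ∀ f : ℝ → ℝ, Function.Periodic f (2 * π) → ContDiff ℝ 2 f → f 0 = 0 →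
      IntervalIntegrable (fun x => (deriv f x) ^ 2 / (Real.sin (x / 2)) ^ 2) volume (-π) π →
      (c₁ * ((∫ x in (-π)..π, (deriv f x) ^ 2 / (Real.sin (x / 2)) ^ 2) +
              ∫ x in (-π)..π, (deriv (deriv f) x) ^ 2 * (Real.cos (x / 2)) ^ 2)
          ≤ (∫ x in (-π)..π, (deriv f x) ^ 2 / (Real.sin (x / 2)) ^ 2) +
            ∫ x in (-π)..π,
              (Real.cos x * deriv f x + Real.sin x * deriv (deriv f) x) ^ 2
                / (Real.sin (x / 2)) ^ 2) ∧
      ((∫ x in (-π)..π, (deriv f x) ^ 2 / (Real.sin (x / 2)) ^ 2) +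
            ∫ x in (-π)..π,
              (Real.cos x * deriv f x + Real.sin x * deriv (deriv f) x) ^ 2
                / (Real.sin (x / 2)) ^ 2
        ≤ c₂ * ((∫ x in (-π)..π, (deriv f x) ^ 2 / (Real.sin (x / 2)) ^ 2) +
              ∫ x in (-π)..π, (deriv (deriv f) x) ^ 2 * (Real.cos (x / 2)) ^ 2)) := by
  refine ⟨1/2, 8, by norm_num, by norm_num, ?_⟩
  intro f _hper hf _hf0 hA
  have hpi : (-π : ℝ) ≤ π := by linarith [Real.pi_pos]
  -- continuity of derivatives
  have hf1 : ContDiff ℝ ((1:ℕ) + 1) f := by exact_mod_cast hf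
  rw [contDiff_succ_iff_deriv] at hf1
  have hd1 : Continuous (deriv f) := hf1.2.2.continuous
  have hd2 : Continuous (deriv (deriv f)) := hf1.2.2.continuous_deriv le_rfl
  -- abbreviations
  set g : ℝ → ℝ := fun x => (deriv f x) ^ 2 / (Real.sin (x / 2)) ^ 2 with hg
  set h : ℝ → ℝ := fun x => (deriv (deriv f) x) ^ 2 * (Real.cos (x / 2)) ^ 2 with hh
  set t : ℝ → ℝ := fun x =>
    (Real.cos x * deriv f x + Real.sin x * deriv (deriv f) x) ^ 2 / (Real.sin (x / 2)) ^ 2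
    with ht
  -- integrability
  have hB : IntervalIntegrable h volume (-π) π := by
    apply Continuous.intervalIntegrable
    fun_prop
  have hbound : IntervalIntegrable (fun x => 2 * g x + 8 * h x) volume (-π) π :=
    (hA.const_mul 2).add (hB.const_mul 8)
  have hT : IntervalIntegrable t volume (-π) π := by
    apply hbound.mono_fun' ?_ ?_
    · apply Measurable.aestronglyMeasurable
      apply Measurable.div
      · fun_prop
      · fun_prop
    · filter_upwards with x
      have := aux_upper (deriv f x) (deriv (deriv f) x) x
      simp only [ht, hg, hh, Real.norm_eq_abs]
      rw [abs_of_nonneg (by positivity)]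
      exact this
  -- nonnegativity of the three integrals
  have hAnn : 0 ≤ ∫ x in (-π)..π, g x :=
    intervalIntegral.integral_nonneg hpi (fun x _ => by positivity)
  have hBnn : 0 ≤ ∫ x in (-π)..π, h x :=
    intervalIntegral.integral_nonneg hpi (fun x _ => by positivity)
  have hTnn : 0 ≤ ∫ x in (-π)..π, t x :=
    intervalIntegral.integral_nonneg hpi (fun x _ => by positivity)
  -- upper bound: ∫ t ≤ 2 ∫ g + 8 ∫ h
  have hup : (∫ x in (-π)..π, t x) ≤
      2 * (∫ x in (-π)..π, g x) + 8 * (∫ x in (-π)..π, h x) := by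
    have := intervalIntegral.integral_mono_on hpi hT hbound
      (fun x _ => aux_upper (deriv f x) (deriv (deriv f) x) x)
    calc (∫ x in (-π)..π, t x) ≤ ∫ x in (-π)..π, (2 * g x + 8 * h x) := this
      _ = 2 * (∫ x in (-π)..π, g x) + 8 * (∫ x in (-π)..π, h x) := by
        rw [intervalIntegral.integral_add (hA.const_mul 2) (hB.const_mul 8),
          intervalIntegral.integral_const_mul, intervalIntegral.integral_const_mul]
  -- lower bound: 4 ∫ h ≤ 2 ∫ t + 2 ∫ g
  have hlow : 4 * (∫ x in (-π)..π, h x) ≤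
      2 * (∫ x in (-π)..π, t x) + 2 * (∫ x in (-π)..π, g x) := by
    have hmono := intervalIntegral.integral_mono_ae hpi (hB.const_mul 4)
      ((hT.const_mul 2).add (hA.const_mul 2)) ?_
    · calc 4 * (∫ x in (-π)..π, h x) = ∫ x in (-π)..π, 4 * h x :=
          (intervalIntegral.integral_const_mul 4 h).symm
        _ ≤ ∫ x in (-π)..π, (2 * t x + 2 * g x) := hmono
        _ = 2 * (∫ x in (-π)..π, t x) + 2 * (∫ x in (-π)..π, g x) := by
          rw [intervalIntegral.integral_add (hT.const_mul 2) (hA.const_mul 2),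
            intervalIntegral.integral_const_mul, intervalIntegral.integral_const_mul]
    · have : ∀ᵐ x : ℝ, Real.sin (x / 2) ≠ 0 := by
        rw [ae_iff]
        simpa using aux_null
      filter_upwards [this] with x hx
      exact aux_lower (deriv f x) (deriv (deriv f) x) x hx
  constructor
  · linarith
  · linarith
end

section
/- Let u : ℝ → ℝ be 2π-periodic and continuously differentiable with u(0) = 0 and u(π) = 0. Then |u(x)| ≤ (π/2) · (sup_y |u'(y)|) · |sin x| for all x. -/
open Real

theorem stmt8 (u : ℝ → ℝ) (hper : Function.Periodic u (2 * π)) (hu : ContDiff ℝ 1 u)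
    (h0 : u 0 = 0) (hπ : u π = 0) :
    ∀ x : ℝ, |u x| ≤ (π / 2) * (⨆ y : ℝ, |deriv u y|) * |Real.sin x| := by
  intro x
  set M : ℝ := ⨆ y : ℝ, |deriv u y| with hMdef
  have hdc : Continuous (deriv u) := hu.continuous_deriv le_rfl
  have hderiv_per : Function.Periodic (deriv u) (2 * π) := by
    intro y
    have hfun : (fun t => u (t + 2 * π)) = u := funext hper
    calc deriv u (y + 2 * π) = deriv (fun t => u (t + 2 * π)) y := by
          rw [deriv_comp_add_const]
      _ = deriv u y := by rw [hfun]
  have habs_per : Function.Periodic (fun y => |deriv u y|) (2 * π) :=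
    hderiv_per.comp abs
  have hbdd : BddAbove (Set.range fun y : ℝ => |deriv u y|) := by
    have h2π : (2 : ℝ) * π ≠ 0 := by positivity
    have := habs_per.isBounded_of_continuous h2π (hdc.abs)
    exact (isBounded_iff_bddBelow_bddAbove.mp this).2
  have hub : ∀ y : ℝ, |deriv u y| ≤ M := fun y => le_ciSup hbdd y
  have hM0 : 0 ≤ M := le_trans (abs_nonneg _) (hub 0)
  have hlip : ∀ a b : ℝ, |u b - u a| ≤ M * |b - a| := by
    intro a b
    have := (convex_univ : Convex ℝ (Set.univ : Set ℝ)).norm_image_sub_le_of_norm_deriv_le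
      (f := u) (fun z _ => (hu.differentiable one_ne_zero) z)
      (fun z _ => by simpa [Real.norm_eq_abs] using hub z)
      (Set.mem_univ a) (Set.mem_univ b)
    simpa [Real.norm_eq_abs] using this
  set k : ℤ := round (x / π) with hkdef
  have hπpos : (0 : ℝ) < π := Real.pi_pos
  have hk : |x - k * π| ≤ π / 2 := by
    have h1 : |x / π - k| ≤ 1 / 2 := abs_sub_round _
    have h2 : x - k * π = (x / π - k) * π := by field_simp
    rw [h2, abs_mul, abs_of_pos hπpos]
    calc |x / π - ↑k| * π ≤ (1 / 2) * π := by
          exact mul_le_mul_of_nonneg_right h1 hπpos.le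
      _ = π / 2 := by ring
  have hzero : u (k * π) = 0 := by
    rcases Int.even_or_odd k with ⟨m, hm⟩ | ⟨m, hm⟩
    · have := (hper.sub_int_mul_eq (x := (k : ℝ) * π) m).symm
      rw [this]
      have : (k : ℝ) * π - (m : ℝ) * (2 * π) = 0 := by
        have : (k : ℝ) = 2 * m := by exact_mod_cast by omega
        rw [this]; ring
      rw [this, h0]
    · have := (hper.sub_int_mul_eq (x := (k : ℝ) * π) m).symm
      rw [this]
      have : (k : ℝ) * π - (m : ℝ) * (2 * π) = π := by
        have : (k : ℝ) = 2 * m + 1 := by exact_mod_cast by omega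
        rw [this]; ring
      rw [this, hπ]
  have habs_sin : |Real.sin (x - k * π)| = |Real.sin x| := by
    have hpa : Function.Periodic (fun t => |Real.sin t|) π := by
      intro t
      simp [Real.sin_antiperiodic t]
    exact hpa.sub_int_mul_eq (x := x) k
  have hsin : |x - k * π| ≤ (π / 2) * |Real.sin x| := by
    set t := x - k * π with ht
    obtain ⟨hk1, hk2⟩ := abs_le.mp hk
    have habs_t : Real.sin |t| = |Real.sin t| := by
      rcases le_or_gt 0 t with h | h
      · rw [abs_of_nonneg h, abs_of_nonneg (Real.sin_nonneg_of_nonneg_of_le_pi h (by linarith))]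
      · have h1 : Real.sin t ≤ 0 := by
          have : 0 ≤ Real.sin (-t) :=
            Real.sin_nonneg_of_nonneg_of_le_pi (by linarith) (by linarith)
          rw [Real.sin_neg] at this; linarith
        rw [abs_of_neg h, Real.sin_neg, abs_of_nonpos h1]
    have hms : 2 / π * |t| ≤ Real.sin |t| := Real.mul_le_sin (abs_nonneg t) hk
    rw [habs_t, habs_sin] at hms
    have h2 : π / 2 * (2 / π * |t|) ≤ π / 2 * |Real.sin x| :=
      mul_le_mul_of_nonneg_left hms (by positivity)
    have h3 : π / 2 * (2 / π * |t|) = |t| := by field_simp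
    linarith
  calc |u x| = |u x - u (↑k * π)| := by rw [hzero, sub_zero]
    _ ≤ M * |x - ↑k * π| := hlip _ _
    _ ≤ M * ((π / 2) * |Real.sin x|) := mul_le_mul_of_nonneg_left hsin hM0
    _ = π / 2 * M * |Real.sin x| := by ring
end

section
/- Let α ∈ (0, 1), a ≠ 0, c ∈ ℝ, L > 0, and let u : [π/2, π] → ℝ be continuously differentiable with u(π) = 0, u'(π) ≠ 0, and |u'(x) − u'(y)| ≤ L |x − y|^α for all x, y ∈ [π/2, π]. Then there exist δ ∈ (0, π/2) and C > 0 (depending only on α, a, c, L, and |u'(π)|) such that for all x ∈ (π − δ, π): u(x) ≠ 0 and | (c + u'(x)) / (a·u(x)) − (c + u'(π)) / (a·u'(π)·(x − π)) | ≤ C |x − π|^{α − 1}. -/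
open Real

theorem stmt12 (α a c L : ℝ) (hα : α ∈ Set.Ioo (0:ℝ) 1) (ha : a ≠ 0) (hL : 0 < L)
    (u du : ℝ → ℝ)
    (hderiv : ∀ x ∈ Set.Icc (π/2) π, HasDerivWithinAt u (du x) (Set.Icc (π/2) π) x)
    (hcont : ContinuousOn du (Set.Icc (π/2) π))
    (huπ : u π = 0) (hduπ : du π ≠ 0)
    (hhold : ∀ x ∈ Set.Icc (π/2) π, ∀ y ∈ Set.Icc (π/2) π,
      |du x - du y| ≤ L * |x - y| ^ α) :
    ∃ δ ∈ Set.Ioo (0:ℝ) (π/2), ∃ C > (0:ℝ), ∀ x ∈ Set.Ioo (π - δ) π,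
      u x ≠ 0 ∧
      |(c + du x) / (a * u x) - (c + du π) / (a * du π * (x - π))|
        ≤ C * |x - π| ^ (α - 1) := by
  obtain ⟨hα0, hα1⟩ := hα
  have hπ : (0:ℝ) < π := pi_pos
  set D := du π with hDdef
  have hD : |D| > 0 := abs_pos.mpr hduπ
  have hπIcc : π ∈ Set.Icc (π/2) π := ⟨by linarith, le_refl _⟩
  -- key Taylor bound
  have hE : ∀ x ∈ Set.Icc (π/2) π, |u x - D * (x - π)| ≤ L * |x - π| ^ α * |x - π| := by
    intro x hx
    have hsub : Set.Icc x π ⊆ Set.Icc (π/2) π := Set.Icc_subset_Icc hx.1 le_rfl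
    have hderiv' : ∀ t ∈ Set.Icc x π,
        HasDerivWithinAt (fun y => u y - D * y) (du t - D) (Set.Icc x π) t := by
      intro t ht
      have h1 := (hderiv t (hsub ht)).mono hsub
      have h2 := h1.sub ((hasDerivWithinAt_id t (Set.Icc x π)).const_mul D)
      rw [mul_one] at h2
      exact h2
    have hbound : ∀ t ∈ Set.Icc x π, ‖du t - D‖ ≤ L * |x - π| ^ α := by
      intro t ht
      have h1 := hhold t (hsub ht) π hπIcc
      have h2 : |t - π| ≤ |x - π| := by
        rw [abs_sub_comm t π, abs_sub_comm x π, abs_of_nonneg (by linarith [ht.2] : (0:ℝ) ≤ π - t),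
          abs_of_nonneg (by linarith [hx.2] : (0:ℝ) ≤ π - x)]
        linarith [ht.1]
      have h3 : |t - π| ^ α ≤ |x - π| ^ α :=
        Real.rpow_le_rpow (abs_nonneg _) h2 hα0.le
      calc ‖du t - D‖ = |du t - du π| := rfl
        _ ≤ L * |t - π| ^ α := h1
        _ ≤ L * |x - π| ^ α := by nlinarith
    have := (convex_Icc x π).norm_image_sub_le_of_norm_hasDerivWithin_le hderiv' hbound
      (Set.left_mem_Icc.mpr hx.2) (Set.right_mem_Icc.mpr hx.2)
    have heq : (u π - D * π) - (u x - D * x) = -(u x - D * (x - π)) := by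
      rw [huπ]; ring
    rw [Real.norm_eq_abs, heq, abs_neg, Real.norm_eq_abs, abs_sub_comm π x] at this
    exact this
  -- choose δ
  set δ := min (π/4) ((|D| / (2*L)) ^ (α⁻¹)) with hδdef
  have hbase : (0:ℝ) < |D| / (2*L) := by positivity
  have hδpos : 0 < δ := lt_min (by linarith) (Real.rpow_pos_of_pos hbase _)
  have hδlt : δ < π/2 := lt_of_le_of_lt (min_le_left _ _) (by linarith)
  refine ⟨δ, ⟨hδpos, hδlt⟩, 2 * (L * (|c| + 2 * |D|)) / (|a| * D^2), by rw [← sq_abs]; positivity, ?_⟩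
  intro x hx
  have hxIcc : x ∈ Set.Icc (π/2) π := by
    constructor
    · have := hx.1
      have h4 : δ ≤ π/4 := min_le_left _ _
      linarith
    · exact hx.2.le
  have hex : x - π < 0 := by linarith [hx.2]
  have hexabs : |x - π| = π - x := by rw [abs_sub_comm]; exact abs_of_pos (by linarith)
  have hepos : (0:ℝ) < |x - π| := by rw [hexabs]; linarith [hx.2]
  have heδ : |x - π| < δ := by rw [hexabs]; linarith [hx.1]
  -- |x-π|^α ≤ |D|/(2L)
  have heα : |x - π| ^ α ≤ |D| / (2*L) := by
    have h1 : |x - π| ^ α ≤ ((|D| / (2*L)) ^ (α⁻¹)) ^ α :=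
      Real.rpow_le_rpow (abs_nonneg _) (le_trans heδ.le (min_le_right _ _)) hα0.le
    rwa [Real.rpow_inv_rpow hbase.le (ne_of_gt hα0)] at h1
  have hEx := hE x hxIcc
  have hsmall : L * |x - π| ^ α * |x - π| ≤ |D| / 2 * |x - π| := by
    have h1 : L * |x - π| ^ α ≤ |D| / 2 := by
      have h2 := mul_le_mul_of_nonneg_left heα hL.le
      have h3 : L * (|D| / (2*L)) = |D| / 2 := by
        field_simp
      linarith
    nlinarith
  have hulow : |D| / 2 * |x - π| ≤ |u x| := by
    have h1 := abs_sub_abs_le_abs_sub (D * (x - π)) (u x)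
    rw [abs_sub_comm (D * (x - π)) (u x), abs_mul] at h1
    linarith
  have hupos : 0 < |u x| := lt_of_lt_of_le (by positivity) hulow
  have hux : u x ≠ 0 := fun h => by simp [h] at hupos
  refine ⟨hux, ?_⟩
  have hexne : x - π ≠ 0 := ne_of_lt hex
  have key : (c + du x) / (a * u x) - (c + D) / (a * D * (x - π))
      = ((du x - D) * D * (x - π) - (c + D) * (u x - D * (x - π)))
        / (a * (u x * (D * (x - π)))) := by
    field_simp
    ring
  rw [key]
  rw [abs_div, abs_mul, abs_mul, abs_mul]
  -- numerator bound
  have hdux : |du x - D| ≤ L * |x - π| ^ α := hhold x hxIcc π hπIcc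
  have hnum : |(du x - D) * D * (x - π) - (c + D) * (u x - D * (x - π))|
      ≤ L * (|c| + 2 * |D|) * |x - π| ^ α * |x - π| := by
    have h1 : |(du x - D) * D * (x - π)| ≤ L * |x - π| ^ α * |D| * |x - π| := by
      rw [abs_mul, abs_mul]
      gcongr
    have h2 : |(c + D) * (u x - D * (x - π))| ≤ (|c| + |D|) * (L * |x - π| ^ α * |x - π|) := by
      rw [abs_mul]
      gcongr
      exact abs_add_le _ _
    calc |(du x - D) * D * (x - π) - (c + D) * (u x - D * (x - π))|
        ≤ |(du x - D) * D * (x - π)| + |(c + D) * (u x - D * (x - π))| := abs_sub _ _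
      _ ≤ L * |x - π| ^ α * |D| * |x - π| + (|c| + |D|) * (L * |x - π| ^ α * |x - π|) := by
          linarith
      _ = L * (|c| + 2 * |D|) * |x - π| ^ α * |x - π| := by ring
  -- denominator lower bound
  have hapos : 0 < |a| := abs_pos.mpr ha
  have hden : |a| * (|D|^2 / 2 * |x - π|^2) ≤ |a| * (|u x| * (|D| * |x - π|)) := by
    have h1 : |D|^2 / 2 * |x - π|^2 = (|D| / 2 * |x - π|) * (|D| * |x - π|) := by ring
    rw [h1]
    gcongr
  have hdenpos : (0:ℝ) < |a| * (|D|^2 / 2 * |x - π|^2) := by positivity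
  have hfin : |(du x - D) * D * (x - π) - (c + D) * (u x - D * (x - π))|
        / (|a| * (|u x| * (|D| * |x - π|)))
      ≤ (L * (|c| + 2 * |D|) * |x - π| ^ α * |x - π|) / (|a| * (|D|^2 / 2 * |x - π|^2)) :=
    div_le_div₀ (by positivity) hnum hdenpos hden
  refine le_trans hfin (le_of_eq ?_)
  rw [Real.rpow_sub hepos, Real.rpow_one, hexabs, sq_abs]
  have hπx : π - x ≠ 0 := ne_of_gt (by linarith [hx.2])
  have hD2ne : D^2 ≠ 0 := pow_ne_zero 2 hduπ
  field_simp
end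

section
/- Let f : ℝ → ℝ be 2π-periodic and continuously differentiable with f(0) = 0, ∫_{-π}^{π} f(x) dx = 0, and ∫_{-π}^{π} f'(x)²/sin²(x/2) dx < ∞. Define the inner product ⟨g, h⟩_{𝓗} := (1/(4π)) ∫_{-π}^{π} g'(x) h'(x) / sin²(x/2) dx, set e₀(x) := cos(x) − 1, and f_e := ⟨f, e₀⟩_{𝓗}. Then ‖f‖_{𝓗}² ≤ 4 ‖f − f_e e₀‖_{𝓗}², where ‖g‖_{𝓗}² = ⟨g, g⟩_{𝓗}. -/
open Real MeasureTheory intervalIntegral Set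

noncomputable def tfun (x : ℝ) : ℝ := if x ≤ 0 then -π - x else π - x

lemma sin_half_ne {x : ℝ} (hx : x ∈ Set.Icc (-π) π) (h0 : x ≠ 0) : Real.sin (x/2) ≠ 0 := by
  intro h
  have hpi := Real.pi_pos
  have h1 : -π < x/2 := by nlinarith [hx.1]
  have h2 : x/2 < π := by nlinarith [hx.2]
  have := (Real.sin_eq_zero_iff_of_lt_of_lt h1 h2).mp h
  exact h0 (by linarith)

/-- split an integral over [-π,π] into two pieces with continuous representatives -/
lemma t_split (g gneg gpos : ℝ → ℝ) (hgneg : Continuous gneg) (hgpos : Continuous gpos)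
    (h1 : ∀ x ∈ Set.Ioc (-π) (0:ℝ), x ≠ 0 → g x = gneg x)
    (h2 : ∀ x ∈ Set.Ioc (0:ℝ) π, g x = gpos x) :
    IntervalIntegrable g volume (-π) π ∧
    ∫ x in (-π)..π, g x = (∫ x in (-π)..(0:ℝ), gneg x) + ∫ x in (0:ℝ)..π, gpos x := by
  have hpi := Real.pi_pos
  have hae0 : ∀ᵐ (x:ℝ) ∂volume, x ≠ (0:ℝ) := by
    rw [MeasureTheory.ae_iff]
    have : {a : ℝ | ¬ a ≠ 0} = {0} := by ext y; simp
    rw [this]; exact Real.volume_singleton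
  have huneg : Set.uIoc (-π) (0:ℝ) = Set.Ioc (-π) 0 := Set.uIoc_of_le (by linarith)
  have hupos : Set.uIoc (0:ℝ) π = Set.Ioc 0 π := Set.uIoc_of_le (by linarith)
  have haeneg : gneg =ᵐ[volume.restrict (Set.uIoc (-π) (0:ℝ))] g := by
    rw [huneg]
    filter_upwards [MeasureTheory.ae_restrict_mem measurableSet_Ioc,
      MeasureTheory.ae_restrict_of_ae hae0] with x hx hx0
    exact (h1 x hx hx0).symm
  have haepos : gpos =ᵐ[volume.restrict (Set.uIoc (0:ℝ) π)] g := by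
    rw [hupos]
    filter_upwards [MeasureTheory.ae_restrict_mem measurableSet_Ioc] with x hx
    exact (h2 x hx).symm
  have ineg : IntervalIntegrable g volume (-π) 0 :=
    (hgneg.intervalIntegrable _ _).congr_ae haeneg
  have ipos : IntervalIntegrable g volume 0 π :=
    (hgpos.intervalIntegrable _ _).congr_ae haepos
  refine ⟨ineg.trans ipos, ?_⟩
  rw [← intervalIntegral.integral_add_adjacent_intervals ineg ipos]
  have e1 : ∫ x in (-π)..(0:ℝ), g x = ∫ x in (-π)..(0:ℝ), gneg x :=
    intervalIntegral.integral_congr_ae ((Set.uIoc_of_le (by linarith : (-π:ℝ) ≤ 0)).symm ▸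
      (by filter_upwards [hae0] with x hx0 hx; exact h1 x hx hx0))
  have e2 : ∫ x in (0:ℝ)..π, g x = ∫ x in (0:ℝ)..π, gpos x :=
    intervalIntegral.integral_congr_ae ((Set.uIoc_of_le (by linarith : (0:ℝ) ≤ π)).symm ▸
      (by filter_upwards with x hx; exact h2 x hx))
  rw [e1, e2]

/-- generic integration by parts: ∫ (c-x) v'(x) -/
lemma ibp' (v v' : ℝ → ℝ) (hv : ∀ x, HasDerivAt v (v' x) x) (hv'c : Continuous v')
    (a b c : ℝ) :
    ∫ x in a..b, (c - x) * v' x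
      = (c-b)*v b - (c-a)*v a + ∫ x in a..b, v x := by
  have hu : ∀ x ∈ Set.uIcc a b, HasDerivAt (fun y => c - y) (-1 : ℝ) x := by
    intro x _
    simpa using ((hasDerivAt_id x).const_sub c)
  have h := intervalIntegral.integral_mul_deriv_eq_deriv_mul
    (u := fun y => c - y) (u' := fun _ => (-1:ℝ)) (v := v) (v' := v')
    hu (fun x _ => hv x) (intervalIntegrable_const) (hv'c.intervalIntegrable _ _)
  have h2 : ∫ x in a..b, (-1:ℝ) * v x = - ∫ x in a..b, v x := by
    rw [← intervalIntegral.integral_neg]; simp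
  rw [h, h2]; ring

lemma ibp_sin (a b c : ℝ) :
    ∫ x in a..b, (c - x) * Real.sin x
      = (c-b)*(-Real.cos b) - (c-a)*(-Real.cos a) + (Real.sin a - Real.sin b) := by
  have h := ibp' (fun y => -Real.cos y) Real.sin
    (fun x => by simpa using (Real.hasDerivAt_cos x).fun_neg) Real.continuous_sin a b c
  rw [h]
  have h4 : ∫ x in a..b, -Real.cos x = -(Real.sin b - Real.sin a) := by
    rw [intervalIntegral.integral_neg, integral_cos]
  rw [h4]; ring

lemma ibp_sq_cos (a b c : ℝ) :
    ∫ x in a..b, (c - x)^2 * Real.cos x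
      = (c-b)^2*Real.sin b - (c-a)^2*Real.sin a
        + 2*((c-b)*(-Real.cos b) - (c-a)*(-Real.cos a) + (Real.sin a - Real.sin b)) := by
  have hu : ∀ x ∈ Set.uIcc a b, HasDerivAt (fun y => (c - y)^2) (-2*(c-x)) x := by
    intro x _
    have := (((hasDerivAt_id x).const_sub c).pow 2)
    simp only [id] at this
    exact this.congr_deriv (by ring)
  have h := intervalIntegral.integral_mul_deriv_eq_deriv_mul
    (u := fun y => (c - y)^2) (u' := fun x => -2*(c-x)) (v := Real.sin) (v' := Real.cos)
    hu (fun x _ => Real.hasDerivAt_sin x)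
    ((by continuity : Continuous fun x : ℝ => -2*(c-x)).intervalIntegrable _ _)
    (Real.continuous_cos.intervalIntegrable _ _)
  rw [h]
  have h3 : ∫ x in a..b, (-2*(c-x)) * Real.sin x = -2 * ∫ x in a..b, (c-x) * Real.sin x := by
    rw [← intervalIntegral.integral_const_mul]
    congr 1; funext x; ring
  rw [h3, ibp_sin]
  ring

lemma int_Fsin (F : ℝ → ℝ) (hF : Continuous F)
    (hint : IntervalIntegrable (fun x => F x^2 / Real.sin (x/2)^2) volume (-π) π)
    (hsin2 : IntervalIntegrable (fun x => Real.sin x^2 / Real.sin (x/2)^2) volume (-π) π) :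
    IntervalIntegrable (fun x => F x * Real.sin x / Real.sin (x/2)^2) volume (-π) π := by
  apply IntervalIntegrable.mono_fun' (g := fun x =>
    (1/2) * (F x^2 / Real.sin (x/2)^2 + Real.sin x^2 / Real.sin (x/2)^2))
  · exact (hint.add hsin2).const_mul _
  · apply Measurable.aestronglyMeasurable
    exact ((hF.mul Real.continuous_sin).measurable).div
      ((Real.continuous_sin.comp (continuous_id.div_const 2)).pow 2).measurable
  · apply Filter.Eventually.of_forall
    intro x
    show ‖F x * Real.sin x / Real.sin (x/2)^2‖ ≤ _
    rcases eq_or_ne (Real.sin (x/2)^2) 0 with h0 | hne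
    · simp [h0]
    · have hpos : 0 < Real.sin (x/2)^2 := lt_of_le_of_ne (sq_nonneg _) (Ne.symm hne)
      have key : |F x * Real.sin x| ≤ (F x^2 + Real.sin x^2)/2 := by
        rw [abs_mul]
        nlinarith [sq_nonneg (|F x| - |Real.sin x|), sq_abs (F x), sq_abs (Real.sin x)]
      rw [Real.norm_eq_abs, abs_div, abs_of_pos hpos]
      show _ ≤ 1/2 * (F x^2 / Real.sin (x/2)^2 + Real.sin x^2 / Real.sin (x/2)^2)
      rw [← add_div]
      calc |F x * Real.sin x| / Real.sin (x/2)^2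
          ≤ ((F x^2 + Real.sin x^2)/2) / Real.sin (x/2)^2 := by gcongr
        _ = 1/2 * ((F x^2 + Real.sin x^2)/Real.sin (x/2)^2) := by ring

lemma expand_sq (F G H : ℝ → ℝ) (α β : ℝ)
    (iFF : IntervalIntegrable (fun x => F x^2 / Real.sin (x/2)^2) volume (-π) π)
    (iGG : IntervalIntegrable (fun x => G x^2 / Real.sin (x/2)^2) volume (-π) π)
    (iHH : IntervalIntegrable (fun x => H x^2 / Real.sin (x/2)^2) volume (-π) π)
    (iFG : IntervalIntegrable (fun x => F x * G x / Real.sin (x/2)^2) volume (-π) π)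
    (iFH : IntervalIntegrable (fun x => F x * H x / Real.sin (x/2)^2) volume (-π) π)
    (iGH : IntervalIntegrable (fun x => G x * H x / Real.sin (x/2)^2) volume (-π) π) :
    ∫ x in (-π)..π, (F x + α*G x - β*H x)^2 / Real.sin (x/2)^2
      = (∫ x in (-π)..π, F x^2 / Real.sin (x/2)^2)
        + α^2 * (∫ x in (-π)..π, G x^2 / Real.sin (x/2)^2)
        + β^2 * (∫ x in (-π)..π, H x^2 / Real.sin (x/2)^2)
        + 2*α * (∫ x in (-π)..π, F x * G x / Real.sin (x/2)^2)
        - 2*β * (∫ x in (-π)..π, F x * H x / Real.sin (x/2)^2)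
        - 2*α*β * (∫ x in (-π)..π, G x * H x / Real.sin (x/2)^2) := by
  have hpt : ∀ x, (F x + α*G x - β*H x)^2 / Real.sin (x/2)^2
      = F x^2 / Real.sin (x/2)^2 + α^2*(G x^2 / Real.sin (x/2)^2)
        + β^2*(H x^2 / Real.sin (x/2)^2) + 2*α*(F x * G x / Real.sin (x/2)^2)
        - 2*β*(F x * H x / Real.sin (x/2)^2) - 2*α*β*(G x * H x / Real.sin (x/2)^2) := by
    intro x
    rcases eq_or_ne (Real.sin (x/2)^2) 0 with h0 | hne
    · simp [h0]
    · field_simp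
      ring
  simp only [hpt]
  rw [intervalIntegral.integral_sub (((((iFF.add (iGG.const_mul _)).add
        (iHH.const_mul _)).add (iFG.const_mul _)).sub (iFH.const_mul _))) (iGH.const_mul _),
    intervalIntegral.integral_sub ((((iFF.add (iGG.const_mul _)).add
        (iHH.const_mul _)).add (iFG.const_mul _))) (iFH.const_mul _),
    intervalIntegral.integral_add (((iFF.add (iGG.const_mul _)).add
        (iHH.const_mul _))) (iFG.const_mul _),
    intervalIntegral.integral_add ((iFF.add (iGG.const_mul _))) (iHH.const_mul _),
    intervalIntegral.integral_add iFF (iGG.const_mul _),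
    intervalIntegral.integral_const_mul, intervalIntegral.integral_const_mul,
    intervalIntegral.integral_const_mul, intervalIntegral.integral_const_mul,
    intervalIntegral.integral_const_mul]

lemma expand_sq2 (F G : ℝ → ℝ) (α : ℝ)
    (iFF : IntervalIntegrable (fun x => F x^2 / Real.sin (x/2)^2) volume (-π) π)
    (iGG : IntervalIntegrable (fun x => G x^2 / Real.sin (x/2)^2) volume (-π) π)
    (iFG : IntervalIntegrable (fun x => F x * G x / Real.sin (x/2)^2) volume (-π) π) :
    ∫ x in (-π)..π, (F x + α*G x)^2 / Real.sin (x/2)^2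
      = (∫ x in (-π)..π, F x^2 / Real.sin (x/2)^2)
        + α^2 * (∫ x in (-π)..π, G x^2 / Real.sin (x/2)^2)
        + 2*α * (∫ x in (-π)..π, F x * G x / Real.sin (x/2)^2) := by
  have hpt : ∀ x, (F x + α*G x)^2 / Real.sin (x/2)^2
      = F x^2 / Real.sin (x/2)^2 + α^2*(G x^2 / Real.sin (x/2)^2)
        + 2*α*(F x * G x / Real.sin (x/2)^2) := by
    intro x
    rcases eq_or_ne (Real.sin (x/2)^2) 0 with h0 | hne
    · simp [h0]
    · field_simp
      ring
  simp only [hpt]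
  rw [intervalIntegral.integral_add ((iFF.add (iGG.const_mul _))) (iFG.const_mul _),
    intervalIntegral.integral_add iFF (iGG.const_mul _),
    intervalIntegral.integral_const_mul, intervalIntegral.integral_const_mul]

noncomputable def psi (x : ℝ) : ℝ := 4*π*(tfun x)*Real.sin (x/2)^2

lemma int_sq_poly (a b c : ℝ) : ∫ x in a..b, (c-x)^2 = ((c-a)^3 - (c-b)^3)/3 := by
  have hd : ∀ x ∈ Set.uIcc a b, HasDerivAt (fun y => -((c-y)^3)/3) ((c-x)^2) x := by
    intro x _
    have h : HasDerivAt (fun y : ℝ => c - y) (-1) x := by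
      simpa using (hasDerivAt_id x).const_sub c
    have h3 : HasDerivAt (fun y : ℝ => (c-y)^3) (3*(c-x)^2*(-1)) x := by
      simpa using h.fun_pow 3
    exact ((h3.neg).div_const 3).congr_deriv (by ring)
  have hcont : Continuous fun x : ℝ => (c-x)^2 := by continuity
  have h2 := intervalIntegral.integral_eq_sub_of_hasDerivAt hd (hcont.intervalIntegrable _ _)
  rw [h2]; ring

lemma key_sin2 {x : ℝ} (hx : x ∈ Set.Icc (-π) π) (h0 : x ≠ 0) :
    Real.sin x^2 / Real.sin (x/2)^2 = 2 + 2*Real.cos x := by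
  have hs := sin_half_ne hx h0
  have h2x : Real.sin x = 2*Real.sin (x/2)*Real.cos (x/2) := by
    have := Real.sin_two_mul (x/2)
    rwa [show 2*(x/2) = x from by ring] at this
  have hc : Real.cos (x/2)^2 = 1/2 + Real.cos x/2 := by
    have := Real.cos_sq (x/2)
    rwa [show 2*(x/2) = x from by ring] at this
  rw [h2x, show (2*Real.sin (x/2)*Real.cos (x/2))^2
      = (4*Real.cos (x/2)^2) * Real.sin (x/2)^2 from by ring,
    mul_div_assoc, div_self (pow_ne_zero 2 hs), mul_one, hc]
  ring

lemma lem_sin2 : IntervalIntegrable (fun x => Real.sin x^2 / Real.sin (x/2)^2) volume (-π) π ∧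
    ∫ x in (-π)..π, Real.sin x^2 / Real.sin (x/2)^2 = 4*π := by
  have hpi := Real.pi_pos
  obtain ⟨hi, hv⟩ := t_split (fun x => Real.sin x^2 / Real.sin (x/2)^2)
    (fun x => 2 + 2*Real.cos x) (fun x => 2 + 2*Real.cos x)
    (by continuity) (by continuity)
    (fun x hx h0 => key_sin2 ⟨hx.1.le, le_trans hx.2 hpi.le⟩ h0)
    (fun x hx => key_sin2 ⟨by linarith [hx.1], hx.2⟩ (ne_of_gt hx.1))
  refine ⟨hi, ?_⟩
  rw [hv]
  have hcc : IntervalIntegrable (fun x : ℝ => 2*Real.cos x) volume (-π) 0 :=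
    (continuous_const.mul Real.continuous_cos).intervalIntegrable _ _
  have hcc2 : IntervalIntegrable (fun x : ℝ => 2*Real.cos x) volume 0 π :=
    (continuous_const.mul Real.continuous_cos).intervalIntegrable _ _
  rw [intervalIntegral.integral_add intervalIntegrable_const hcc,
    intervalIntegral.integral_add intervalIntegrable_const hcc2,
    intervalIntegral.integral_const_mul, intervalIntegral.integral_const_mul,
    integral_cos, integral_cos, intervalIntegral.integral_const,
    intervalIntegral.integral_const]
  simp [Real.sin_pi]
  ring

lemma sin_half_sq (x : ℝ) : Real.sin (x/2)^2 = 1/2 - Real.cos x/2 := by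
  have := Real.sin_sq_eq_half_sub (x/2)
  rwa [show 2*(x/2) = x from by ring] at this

lemma key_psi (g : ℝ → ℝ) {x : ℝ} (hx : x ∈ Set.Icc (-π) π) (h0 : x ≠ 0) :
    g x * psi x / Real.sin (x/2)^2 = 4*π*(tfun x * g x) := by
  have hs := sin_half_ne hx h0
  rw [psi, show g x * (4*π*(tfun x)*Real.sin (x/2)^2)
      = (4*π*(tfun x * g x))*Real.sin (x/2)^2 from by ring,
    mul_div_assoc, div_self (pow_ne_zero 2 hs), mul_one]

lemma lem_sinpsi : IntervalIntegrable (fun x => Real.sin x * psi x / Real.sin (x/2)^2)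
      volume (-π) π ∧
    ∫ x in (-π)..π, Real.sin x * psi x / Real.sin (x/2)^2 = 8*π^2 := by
  have hpi := Real.pi_pos
  obtain ⟨hi, hv⟩ := t_split (fun x => Real.sin x * psi x / Real.sin (x/2)^2)
    (fun x => 4*π*((-π - x) * Real.sin x)) (fun x => 4*π*((π - x) * Real.sin x))
    (by continuity) (by continuity)
    (fun x hx h0 => by
      show Real.sin x * psi x / Real.sin (x/2)^2 = _
      rw [key_psi _ ⟨hx.1.le, le_trans hx.2 hpi.le⟩ h0, tfun, if_pos hx.2])
    (fun x hx => by
      show Real.sin x * psi x / Real.sin (x/2)^2 = _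
      rw [key_psi _ ⟨by linarith [hx.1], hx.2⟩ (ne_of_gt hx.1), tfun,
        if_neg (not_le.mpr hx.1)])
  refine ⟨hi, ?_⟩
  rw [hv, intervalIntegral.integral_const_mul, intervalIntegral.integral_const_mul,
    ibp_sin (-π) 0 (-π), ibp_sin 0 π π]
  simp [Real.sin_pi, Real.cos_pi]
  ring

lemma key_psi2 {x : ℝ} (hx : x ∈ Set.Icc (-π) π) (h0 : x ≠ 0) :
    psi x^2 / Real.sin (x/2)^2 = 16*π^2*(tfun x^2 * (1/2 - Real.cos x/2)) := by
  have hs := sin_half_ne hx h0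
  rw [psi, show (4*π*(tfun x)*Real.sin (x/2)^2)^2
      = (16*π^2*(tfun x^2 * Real.sin (x/2)^2))*Real.sin (x/2)^2 from by ring,
    mul_div_assoc, div_self (pow_ne_zero 2 hs), mul_one, sin_half_sq]

lemma lem_psi2 : IntervalIntegrable (fun x => psi x^2 / Real.sin (x/2)^2) volume (-π) π ∧
    ∫ x in (-π)..π, psi x^2 / Real.sin (x/2)^2 = 16*π^2*(π^3/3 - 2*π) := by
  have hpi := Real.pi_pos
  obtain ⟨hi, hv⟩ := t_split (fun x => psi x^2 / Real.sin (x/2)^2)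
    (fun x => 8*π^2*(-π - x)^2 - 8*π^2*((-π - x)^2 * Real.cos x))
    (fun x => 8*π^2*(π - x)^2 - 8*π^2*((π - x)^2 * Real.cos x))
    (by continuity) (by continuity)
    (fun x hx h0 => by
      show psi x^2 / Real.sin (x/2)^2 = _
      rw [key_psi2 ⟨hx.1.le, le_trans hx.2 hpi.le⟩ h0, tfun, if_pos hx.2]; ring)
    (fun x hx => by
      show psi x^2 / Real.sin (x/2)^2 = _
      rw [key_psi2 ⟨by linarith [hx.1], hx.2⟩ (ne_of_gt hx.1), tfun,
        if_neg (not_le.mpr hx.1)]; ring)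
  refine ⟨hi, ?_⟩
  have c1 : Continuous fun x : ℝ => 8*π^2*(-π - x)^2 := by continuity
  have c2 : Continuous fun x : ℝ => 8*π^2*((-π - x)^2 * Real.cos x) := by continuity
  have c3 : Continuous fun x : ℝ => 8*π^2*(π - x)^2 := by continuity
  have c4 : Continuous fun x : ℝ => 8*π^2*((π - x)^2 * Real.cos x) := by continuity
  have e1 : ∀ x : ℝ, (-π - x)^2 = (-π - x)^2 := fun _ => rfl
  rw [hv, intervalIntegral.integral_sub (c1.intervalIntegrable _ _) (c2.intervalIntegrable _ _),
    intervalIntegral.integral_sub (c3.intervalIntegrable _ _) (c4.intervalIntegrable _ _),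
    intervalIntegral.integral_const_mul, intervalIntegral.integral_const_mul,
    intervalIntegral.integral_const_mul, intervalIntegral.integral_const_mul]
  have q1 : ∫ x in (-π)..(0:ℝ), (-π - x)^2 = ((-π - -π)^3 - (-π - 0)^3)/3 := int_sq_poly _ _ _
  have q2 : ∫ x in (0:ℝ)..π, (π - x)^2 = ((π - 0)^3 - (π - π)^3)/3 := int_sq_poly _ _ _
  have q3 : ∫ x in (-π)..(0:ℝ), (-π - x)^2 * Real.cos x
      = (-π - 0)^2*Real.sin 0 - (-π - -π)^2*Real.sin (-π)
        + 2*((-π - 0)*(-Real.cos 0) - (-π - -π)*(-Real.cos (-π))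
          + (Real.sin (-π) - Real.sin 0)) := ibp_sq_cos _ _ _
  have q4 : ∫ x in (0:ℝ)..π, (π - x)^2 * Real.cos x
      = (π - π)^2*Real.sin π - (π - 0)^2*Real.sin 0
        + 2*((π - π)*(-Real.cos π) - (π - 0)*(-Real.cos 0)
          + (Real.sin 0 - Real.sin π)) := ibp_sq_cos _ _ _
  rw [q1, q2, q3, q4]
  simp [Real.sin_pi, Real.cos_pi]
  ring

lemma lem_Fpsi (f : ℝ → ℝ) (hf : ContDiff ℝ 1 f) (hf0 : f 0 = 0)
    (hmean : (∫ x in (-π)..π, f x) = 0) :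
    IntervalIntegrable (fun x => deriv f x * psi x / Real.sin (x/2)^2) volume (-π) π ∧
    ∫ x in (-π)..π, deriv f x * psi x / Real.sin (x/2)^2 = 0 := by
  have hpi := Real.pi_pos
  have hF : Continuous (deriv f) := hf.continuous_deriv le_rfl
  obtain ⟨hi, hv⟩ := t_split (fun x => deriv f x * psi x / Real.sin (x/2)^2)
    (fun x => 4*π*((-π - x) * deriv f x)) (fun x => 4*π*((π - x) * deriv f x))
    (continuous_const.mul ((continuous_const.sub continuous_id).mul hF))
    (continuous_const.mul ((continuous_const.sub continuous_id).mul hF))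
    (fun x hx h0 => by
      show deriv f x * psi x / Real.sin (x/2)^2 = _
      rw [key_psi _ ⟨hx.1.le, le_trans hx.2 hpi.le⟩ h0, tfun, if_pos hx.2])
    (fun x hx => by
      show deriv f x * psi x / Real.sin (x/2)^2 = _
      rw [key_psi _ ⟨by linarith [hx.1], hx.2⟩ (ne_of_gt hx.1), tfun,
        if_neg (not_le.mpr hx.1)])
  refine ⟨hi, ?_⟩
  have hder : ∀ x, HasDerivAt f (deriv f x) x :=
    fun x => (hf.differentiable one_ne_zero x).hasDerivAt
  have r1 : ∫ x in (-π)..(0:ℝ), (-π - x) * deriv f x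
      = (-π - 0)*f 0 - (-π - -π)*f (-π) + ∫ x in (-π)..(0:ℝ), f x := ibp' f _ hder hF _ _ _
  have r2 : ∫ x in (0:ℝ)..π, (π - x) * deriv f x
      = (π - π)*f π - (π - 0)*f 0 + ∫ x in (0:ℝ)..π, f x := ibp' f _ hder hF _ _ _
  have hadd : (∫ x in (-π)..(0:ℝ), f x) + ∫ x in (0:ℝ)..π, f x = 0 := by
    rw [intervalIntegral.integral_add_adjacent_intervals
      (hf.continuous.intervalIntegrable _ _) (hf.continuous.intervalIntegrable _ _)]
    exact hmean
  rw [hv, intervalIntegral.integral_const_mul, intervalIntegral.integral_const_mul, r1, r2,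
    hf0]
  have : ((-π : ℝ) - 0)*0 - (-π - -π)*f (-π) + (∫ x in (-π)..(0:ℝ), f x)
      = ∫ x in (-π)..(0:ℝ), f x := by ring
  rw [this]
  have : ((π : ℝ) - π)*f π - (π - 0)*0 + (∫ x in (0:ℝ)..π, f x)
      = ∫ x in (0:ℝ)..π, f x := by ring
  rw [this, ← mul_add, hadd, mul_zero]

set_option maxHeartbeats 1000000 in
theorem stmt14 (f : ℝ → ℝ) (hper : Function.Periodic f (2 * π)) (hf : ContDiff ℝ 1 f)
    (hf0 : f 0 = 0) (hmean : (∫ x in (-π)..π, f x) = 0)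
    (hint : IntervalIntegrable (fun x => (deriv f x) ^ 2 / (Real.sin (x / 2)) ^ 2)
      volume (-π) π)
    (fe : ℝ)
    (hfe : fe = (1 / (4 * π)) * ∫ x in (-π)..π,
        deriv f x * deriv (fun y => Real.cos y - 1) x / (Real.sin (x / 2)) ^ 2) :
    (1 / (4 * π)) * (∫ x in (-π)..π, (deriv f x) ^ 2 / (Real.sin (x / 2)) ^ 2)
      ≤ 4 * ((1 / (4 * π)) * ∫ x in (-π)..π,
          (deriv (fun y => f y - fe * (Real.cos y - 1)) x) ^ 2 / (Real.sin (x / 2)) ^ 2) := by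
  have hpi : (0:ℝ) < π := Real.pi_pos
  have hF : Continuous (deriv f) := hf.continuous_deriv le_rfl
  have hEd : ∀ x : ℝ, deriv (fun y => Real.cos y - 1) x = -Real.sin x := by
    intro x
    rw [deriv_fun_sub Real.differentiableAt_cos (differentiableAt_const _), Real.deriv_cos,
      deriv_const]
    ring
  have hDd : ∀ x, deriv (fun y => f y - fe * (Real.cos y - 1)) x
      = deriv f x + fe * Real.sin x := by
    intro x
    have h1 : DifferentiableAt ℝ f x := hf.differentiable one_ne_zero x
    have h2 : DifferentiableAt ℝ (fun y => Real.cos y - 1) x :=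
      Real.differentiableAt_cos.sub (differentiableAt_const _)
    rw [deriv_fun_sub h1 (h2.const_mul fe), deriv_const_mul _ h2, hEd]
    ring
  obtain ⟨isin2, vsin2⟩ := lem_sin2
  obtain ⟨ipsi2, vpsi2⟩ := lem_psi2
  obtain ⟨isinpsi, vsinpsi⟩ := lem_sinpsi
  obtain ⟨iFpsi, vFpsi⟩ := lem_Fpsi f hf hf0 hmean
  have iFsin := int_Fsin (deriv f) hF hint isin2
  have hfe2 : (∫ x in (-π)..π, deriv f x * Real.sin x / Real.sin (x/2)^2) = -(4*π)*fe := by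
    have h1 : (∫ x in (-π)..π,
        deriv f x * deriv (fun y => Real.cos y - 1) x / (Real.sin (x / 2)) ^ 2)
        = -∫ x in (-π)..π, deriv f x * Real.sin x / Real.sin (x/2)^2 := by
      rw [← intervalIntegral.integral_neg]
      apply intervalIntegral.integral_congr
      intro x _
      simp only [hEd]
      ring
    rw [h1] at hfe
    have h4 : (4:ℝ)*π ≠ 0 := by positivity
    field_simp at hfe
    linarith
  have hRHS : (∫ x in (-π)..π,
      (deriv (fun y => f y - fe * (Real.cos y - 1)) x) ^ 2 / (Real.sin (x / 2)) ^ 2)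
      = (∫ x in (-π)..π, (deriv f x)^2 / Real.sin (x/2)^2) - 4*π*fe^2 := by
    have hcong : (∫ x in (-π)..π,
        (deriv (fun y => f y - fe * (Real.cos y - 1)) x) ^ 2 / (Real.sin (x / 2)) ^ 2)
        = ∫ x in (-π)..π, (deriv f x + fe*Real.sin x)^2 / Real.sin (x/2)^2 := by
      apply intervalIntegral.integral_congr
      intro x _
      show deriv (fun y => f y - fe * (Real.cos y - 1)) x ^ 2 / Real.sin (x/2)^2 = _
      rw [hDd]
    rw [hcong, expand_sq2 (deriv f) Real.sin fe hint isin2 iFsin, vsin2, hfe2]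
    ring
  set α := 4*π*fe/(3*π) with hα
  set β := 4*π*fe/(2*π^2*(π^2-6)) with hβ
  have hQ0 : 0 ≤ ∫ x in (-π)..π,
      (deriv f x + α*Real.sin x - β*psi x)^2 / Real.sin (x/2)^2 :=
    intervalIntegral.integral_nonneg (by linarith)
      (fun u _ => div_nonneg (sq_nonneg _) (sq_nonneg _))
  have hQ := expand_sq (deriv f) Real.sin psi α β hint isin2 ipsi2 iFsin iFpsi isinpsi
  rw [hQ, vsin2, vpsi2, vFpsi, vsinpsi, hfe2] at hQ0
  have h6 : 6 < π^2 := by nlinarith [Real.pi_gt_three]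
  have h18 : π^2 ≤ 18 := by nlinarith [Real.pi_lt_d2]
  have h60 : π^2 - 6 ≠ 0 := ne_of_gt (by linarith)
  set a := ∫ x in (-π)..π, (deriv f x)^2 / Real.sin (x/2)^2 with ha
  have hsimp : a + α^2*(4*π) + β^2*(16*π^2*(π^3/3 - 2*π)) + 2*α*(-(4*π)*fe)
      - 2*β*0 - 2*α*β*(8*π^2)
      = a - (2/(9*π))*(4*π*fe)^2 - (4/(3*π*(π^2-6)))*(4*π*fe)^2 := by
    rw [hα, hβ]
    field_simp
    ring
  rw [hsimp] at hQ0
  have hc : 1/(3*π) ≤ 2/(9*π) + 4/(3*π*(π^2-6)) := by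
    have e : 2/(9*π) + 4/(3*π*(π^2-6)) - 1/(3*π) = (18 - π^2)/(9*π*(π^2-6)) := by
      field_simp
      ring
    have h0 : 0 ≤ (18 - π^2)/(9*π*(π^2-6)) :=
      div_nonneg (by linarith)
        (mul_pos (by positivity : (0:ℝ) < 9*π) (by linarith : (0:ℝ) < π^2-6)).le
    linarith
  have hkey : 16*π^2*fe^2 ≤ 3*π*a := by
    have h1 : (1/(3*π))*(4*π*fe)^2 ≤ (2/(9*π) + 4/(3*π*(π^2-6)))*(4*π*fe)^2 :=
      mul_le_mul_of_nonneg_right hc (sq_nonneg _)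
    have h2 : (2/(9*π) + 4/(3*π*(π^2-6)))*(4*π*fe)^2 ≤ a := by nlinarith [hQ0]
    have h3 : (1/(3*π))*(4*π*fe)^2 ≤ a := le_trans h1 h2
    have h4 : (1/(3*π))*(4*π*fe)^2 = (16*π^2*fe^2)/(3*π) := by
      field_simp
      ring
    rw [h4, div_le_iff₀ (by positivity : (0:ℝ) < 3*π)] at h3
    linarith [h3]
  rw [hRHS]
  have hfin : a ≤ 4*(a - 4*π*fe^2) := by nlinarith [hkey, hpi, sq_nonneg fe]
  calc (1/(4*π))*a ≤ (1/(4*π))*(4*(a - 4*π*fe^2)) :=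
      mul_le_mul_of_nonneg_left hfin (by positivity)
    _ = 4*((1/(4*π))*(a - 4*π*fe^2)) := by ring
end

section
/- Let ω : ℝ → ℝ be 2π-periodic and twice continuously differentiable with ∫_{-π}^{π} ω'(x)²/sin²(x/2) dx < ∞, and let b ∈ ℝ. Then ∫_{-π}^{π} (−sin(x) ω''(x)) · (ω'(x) + b sin(x)) / sin²(x/2) dx = −(1/2) ∫_{-π}^{π} ω'(x)² / sin²(x/2) dx − 4 b ∫_{-π}^{π} ω''(x) cos²(x/2) dx. -/
open Real MeasureTheory intervalIntegral Filter Topology Set Asymptotics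

lemma aux_sin_half_ne {x : ℝ} (h1 : -π ≤ x) (h2 : x ≤ π) (hx : x ≠ 0) :
    Real.sin (x / 2) ≠ 0 := by
  have hπ := Real.pi_pos
  rcases lt_or_gt_of_ne hx with h | h
  · exact ne_of_lt (Real.sin_neg_of_neg_of_neg_pi_lt (by linarith) (by linarith))
  · exact ne_of_gt (Real.sin_pos_of_pos_of_lt_pi (by linarith) (by linarith))

lemma aux_sin_double (x : ℝ) : Real.sin x = 2 * Real.sin (x / 2) * Real.cos (x / 2) := by
  have := Real.sin_two_mul (x / 2)
  rw [show 2 * (x / 2) = x by ring] at this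
  linarith

lemma auxF_deriv {g : ℝ → ℝ} {x d : ℝ} (hg : HasDerivAt g d x) (hs : Real.sin (x / 2) ≠ 0) :
    HasDerivAt (fun y => Real.cos (y / 2) / Real.sin (y / 2) * (g y) ^ 2)
      (Real.sin x * d * g x / Real.sin (x / 2) ^ 2
        - 1 / 2 * ((g x) ^ 2 / Real.sin (x / 2) ^ 2)) x := by
  have h2 : HasDerivAt (fun y : ℝ => y / 2) (1 / 2) x := (hasDerivAt_id x).div_const 2
  have hcos : HasDerivAt (fun y => Real.cos (y / 2)) (-Real.sin (x / 2) * (1 / 2)) x :=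
    h2.cos
  have hsin : HasDerivAt (fun y => Real.sin (y / 2)) (Real.cos (x / 2) * (1 / 2)) x :=
    h2.sin
  have hq := (hcos.div hsin hs).mul (hg.pow 2)
  refine hq.congr_deriv ?_
  simp only [Pi.div_apply, Pi.pow_apply]
  have hpy : Real.sin (x / 2) ^ 2 + Real.cos (x / 2) ^ 2 = 1 := Real.sin_sq_add_cos_sq _
  rw [aux_sin_double x]
  field_simp
  linear_combination (-g x ^ 2) * hpy

lemma aux_tendsto_x_div_sin : Tendsto (fun x : ℝ => x / Real.sin (x / 2)) (𝓝[≠] (0:ℝ)) (𝓝 2) := by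
  have hsin0 : Tendsto (fun y : ℝ => Real.sin y / y) (𝓝[≠] (0:ℝ)) (𝓝 1) := by
    have h := hasDerivAt_iff_tendsto_slope.mp (Real.hasDerivAt_sin 0)
    rw [Real.cos_zero] at h
    refine h.congr' ?_
    filter_upwards [self_mem_nhdsWithin] with y hy
    simp [slope_def_field, div_eq_div_iff]
  have hhalf : Tendsto (fun x : ℝ => x / 2) (𝓝[≠] (0:ℝ)) (𝓝[≠] (0:ℝ)) := by
    rw [tendsto_nhdsWithin_iff]
    constructor
    · simpa using (continuous_id.div_const (2:ℝ)).tendsto' 0 0 (by norm_num) |>.mono_left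
        nhdsWithin_le_nhds
    · filter_upwards [self_mem_nhdsWithin] with y hy
      simp only [Set.mem_compl_iff, Set.mem_singleton_iff] at hy ⊢
      exact fun h => hy (by linarith)
  have h1 : Tendsto (fun x : ℝ => Real.sin (x / 2) / (x / 2)) (𝓝[≠] (0:ℝ)) (𝓝 1) :=
    hsin0.comp hhalf
  have h2 : Tendsto (fun x : ℝ => (x / 2) / Real.sin (x / 2)) (𝓝[≠] (0:ℝ)) (𝓝 1) := by
    have := (h1.inv₀ one_ne_zero)
    rw [inv_one] at this
    exact this.congr fun x => by rw [inv_div]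
  have h3 := h2.const_mul (2:ℝ)
  norm_num at h3
  exact h3.congr fun x => by ring

lemma aux_tendsto_F_zero {g : ℝ → ℝ} {d : ℝ} (hgc : Continuous g)
    (hg : HasDerivAt g d 0) (h0 : g 0 = 0) :
    Tendsto (fun x => Real.cos (x / 2) / Real.sin (x / 2) * (g x) ^ 2) (𝓝[≠] (0:ℝ)) (𝓝 0) := by
  have hslope : Tendsto (fun y => g y / y) (𝓝[≠] (0:ℝ)) (𝓝 d) := by
    have h := hasDerivAt_iff_tendsto_slope.mp hg
    refine h.congr' ?_
    filter_upwards [self_mem_nhdsWithin] with y hy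
    simp [slope_def_field, h0]
  have hgs : Tendsto (fun x => g x / Real.sin (x / 2)) (𝓝[≠] (0:ℝ)) (𝓝 (d * 2)) := by
    refine (hslope.mul aux_tendsto_x_div_sin).congr' ?_
    filter_upwards [self_mem_nhdsWithin] with x hx
    have hx' : x ≠ 0 := hx
    rcases eq_or_ne (Real.sin (x / 2)) 0 with h | h
    · simp [h]
    · field_simp
  have hcos : Tendsto (fun x : ℝ => Real.cos (x / 2)) (𝓝[≠] (0:ℝ)) (𝓝 1) := by
    have : Continuous fun x : ℝ => Real.cos (x / 2) := Real.continuous_cos.comp (continuous_id.div_const 2)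
    simpa using (this.tendsto' 0 1 (by norm_num)).mono_left nhdsWithin_le_nhds
  have hgz : Tendsto g (𝓝[≠] (0:ℝ)) (𝓝 0) := by
    simpa [h0] using (hgc.tendsto 0).mono_left (nhdsWithin_le_nhds (s := {(0:ℝ)}ᶜ))
  have := (hcos.mul hgs).mul hgz
  norm_num at this
  exact this.congr fun x => by ring

lemma aux_g0 {g : ℝ → ℝ} (hgc : Continuous g)
    (hint : IntervalIntegrable (fun x => (g x) ^ 2 / (Real.sin (x / 2)) ^ 2) volume (-π) π) :
    g 0 = 0 := by
  have hπ := Real.pi_pos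
  have hπ3 := Real.pi_gt_three
  by_contra hc
  have hg0 : 0 < g 0 ^ 2 := by positivity
  have hev : ∀ᶠ x in 𝓝[≠] (0:ℝ),
      ‖(x - 0)⁻¹‖ ≤ (g 0 ^ 2)⁻¹ * ‖g x ^ 2 / Real.sin (x / 2) ^ 2‖ := by
    have h1 : ∀ᶠ x in 𝓝 (0:ℝ), |g x - g 0| < |g 0| / 2 := by
      have : 0 < |g 0| / 2 := by positivity
      exact (hgc.tendsto 0).eventually (eventually_abs_sub_lt (g 0) this)
    have h2 : ∀ᶠ x in 𝓝 (0:ℝ), |x - 0| < 1 := eventually_abs_sub_lt 0 one_pos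
    filter_upwards [h1.filter_mono nhdsWithin_le_nhds, h2.filter_mono nhdsWithin_le_nhds,
      self_mem_nhdsWithin] with x hx1 hx2 hx0
    have hx0' : x ≠ 0 := hx0
    rw [sub_zero] at hx2
    have hgx : |g 0| / 2 ≤ |g x| := by
      have := abs_sub_abs_le_abs_sub (g 0) (g x)
      rw [abs_sub_comm] at hx1
      linarith
    have hsne : Real.sin (x / 2) ≠ 0 := by
      obtain ⟨ha, hb⟩ := abs_lt.mp hx2
      intro h
      have := (Real.sin_eq_zero_iff_of_lt_of_lt (x := x / 2) (by linarith) (by linarith)).mp h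
      exact hx0' (by linarith)
    have hs2pos : 0 < Real.sin (x / 2) ^ 2 := by positivity
    have hsle : Real.sin (x / 2) ^ 2 ≤ x ^ 2 / 4 := by
      have := Real.sin_sq_le_sq (x := x / 2)
      nlinarith
    have hg2 : g 0 ^ 2 / 4 ≤ g x ^ 2 := by
      nlinarith [sq_abs (g x), sq_abs (g 0), abs_nonneg (g 0)]
    have hx2pos : (0:ℝ) < x ^ 2 := by positivity
    have key : g 0 ^ 2 / x ^ 2 ≤ g x ^ 2 / Real.sin (x / 2) ^ 2 := by
      calc g 0 ^ 2 / x ^ 2 = (g 0 ^ 2 / 4) / (x ^ 2 / 4) := by ring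
        _ ≤ g x ^ 2 / Real.sin (x / 2) ^ 2 := div_le_div₀ (sq_nonneg _) hg2 hs2pos hsle
    have hfx : 0 ≤ g x ^ 2 / Real.sin (x / 2) ^ 2 := by positivity
    rw [sub_zero, Real.norm_eq_abs, Real.norm_eq_abs, abs_of_nonneg hfx, abs_inv]
    have h4 : |x|⁻¹ ≤ 1 / x ^ 2 := by
      rw [← one_div]
      apply one_div_le_one_div_of_le hx2pos
      nlinarith [sq_abs x, abs_nonneg x]
    have h5 : 1 / x ^ 2 ≤ (g 0 ^ 2)⁻¹ * (g x ^ 2 / Real.sin (x / 2) ^ 2) := by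
      have := mul_le_mul_of_nonneg_left key (inv_nonneg.mpr (le_of_lt hg0))
      rw [show (g 0 ^ 2)⁻¹ * (g 0 ^ 2 / x ^ 2) = 1 / x ^ 2 by field_simp] at this
      exact this
    linarith
  exact not_intervalIntegrable_of_sub_inv_isBigO_punctured
    (isBigO_iff.mpr ⟨_, hev⟩) (by intro h; linarith : -π ≠ π)
    (Set.mem_uIcc.mpr (Or.inl ⟨by linarith, by linarith⟩)) hint

theorem stmt15 (ω : ℝ → ℝ) (hper : Function.Periodic ω (2 * π)) (hω : ContDiff ℝ 2 ω)
    (hint : IntervalIntegrable (fun x => (deriv ω x) ^ 2 / (Real.sin (x / 2)) ^ 2)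
      volume (-π) π)
    (b : ℝ) :
    ∫ x in (-π)..π,
        (-(Real.sin x) * deriv (deriv ω) x) * (deriv ω x + b * Real.sin x)
          / (Real.sin (x / 2)) ^ 2
      = -(1 / 2) * (∫ x in (-π)..π, (deriv ω x) ^ 2 / (Real.sin (x / 2)) ^ 2)
        - 4 * b * ∫ x in (-π)..π, deriv (deriv ω) x * (Real.cos (x / 2)) ^ 2 := by
  have hπ := Real.pi_pos
  set g := deriv ω with hgdef
  set k := deriv (deriv ω) with hkdef
  have hg1 : ContDiff ℝ 1 g := by
    have h2 : ContDiff ℝ (1 + 1) ω := by convert hω using 2; norm_num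
    exact (contDiff_succ_iff_deriv.mp h2).2.2
  have hgc : Continuous g := hg1.continuous
  have hgd : ∀ x, HasDerivAt g (k x) x := fun x =>
    ((hg1.differentiable one_ne_zero) x).hasDerivAt
  have hkc : Continuous k := by
    have h1 : ContDiff ℝ (0 + 1) g := by convert hg1 using 2; norm_num
    exact ((contDiff_succ_iff_deriv.mp h1).2.2).continuous
  have h0 : g 0 = 0 := aux_g0 hgc hint
  obtain ⟨C, hC⟩ := (isCompact_Icc (a := -π) (b := π)).exists_bound_of_continuousOn
    hkc.continuousOn
  have hC0 : 0 ≤ C := le_trans (norm_nonneg _) (hC 0 ⟨by linarith, by linarith⟩)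
  set u : ℝ → ℝ := fun x => Real.sin x * k x * g x / Real.sin (x / 2) ^ 2 with hu
  set v : ℝ → ℝ := fun x => -(Real.sin x ^ 2 * k x) / Real.sin (x / 2) ^ 2 with hv
  set F : ℝ → ℝ := fun x => Real.cos (x / 2) / Real.sin (x / 2) * (g x) ^ 2 with hF
  -- pointwise form of u
  have hu_eq : ∀ x, u x = 2 * Real.cos (x / 2) * k x * (g x / Real.sin (x / 2)) := by
    intro x
    rcases eq_or_ne (Real.sin (x / 2)) 0 with h | h
    · simp [hu, aux_sin_double x, h]
    · simp only [hu]
      rw [aux_sin_double x]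
      field_simp
  -- integrability of u
  have hu_int : IntervalIntegrable u volume (-π) π := by
    have hbound_int : IntervalIntegrable
        (fun x => C * (1 + g x ^ 2 / Real.sin (x / 2) ^ 2)) volume (-π) π :=
      ((_root_.intervalIntegrable_const (c := (1:ℝ))).add hint).const_mul C
    apply hbound_int.mono_fun'
    · exact (((Real.continuous_sin.mul hkc).mul hgc).measurable.div
        (((Real.continuous_sin.comp (continuous_id.div_const 2)).pow 2).measurable)).aestronglyMeasurable
    · apply ae_restrict_of_forall_mem measurableSet_uIoc
      intro x hx
      show ‖u x‖ ≤ C * (1 + g x ^ 2 / Real.sin (x / 2) ^ 2)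
      have hxI : x ∈ Set.Icc (-π) π := by
        rw [Set.uIoc_of_le (by linarith : -π ≤ π)] at hx
        exact ⟨le_of_lt hx.1, hx.2⟩
      have h1 : |k x| ≤ C := by rw [← Real.norm_eq_abs]; exact hC x hxI
      have h2 : |Real.cos (x / 2)| ≤ 1 := Real.abs_cos_le_one _
      rw [hu_eq x, Real.norm_eq_abs]
      have ht : (g x / Real.sin (x / 2)) ^ 2 = g x ^ 2 / Real.sin (x / 2) ^ 2 := div_pow _ _ _
      set t := g x / Real.sin (x / 2)
      have habs : |2 * Real.cos (x / 2) * k x * t| = 2 * |Real.cos (x / 2)| * |k x| * |t| := by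
        rw [abs_mul, abs_mul, abs_mul, abs_two]
      rw [habs, ← ht]
      nlinarith [mul_nonneg (mul_nonneg (sub_nonneg.mpr h2) (abs_nonneg (k x))) (abs_nonneg t),
        mul_nonneg (sub_nonneg.mpr h1) (abs_nonneg t),
        mul_nonneg hC0 (sq_nonneg (|t| - 1)), sq_abs t, abs_nonneg t, abs_nonneg (k x)]
  -- FTC on subintervals
  have hderiv : ∀ x, Real.sin (x / 2) ≠ 0 → HasDerivAt F
      (u x - 1 / 2 * (g x ^ 2 / Real.sin (x / 2) ^ 2)) x := fun x hx =>
    auxF_deriv (hgd x) hx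
  have hE_int : ∀ a' b', Set.uIcc a' b' ⊆ Set.uIcc (-π) π → IntervalIntegrable
      (fun x => u x - 1 / 2 * (g x ^ 2 / Real.sin (x / 2) ^ 2)) volume a' b' := by
    intro a' b' hsub
    exact ((hu_int.sub (hint.const_mul (1 / 2))).mono_set hsub)
  have hsub1 : Set.uIcc (0:ℝ) π ⊆ Set.uIcc (-π) π := by
    rw [Set.uIcc_of_le (by linarith : (0:ℝ) ≤ π), Set.uIcc_of_le (by linarith : -π ≤ π)]
    exact Set.Icc_subset_Icc (by linarith) le_rfl
  have hsub2 : Set.uIcc (-π) (0:ℝ) ⊆ Set.uIcc (-π) π := by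
    rw [Set.uIcc_of_le (by linarith : -π ≤ (0:ℝ)), Set.uIcc_of_le (by linarith : -π ≤ π)]
    exact Set.Icc_subset_Icc le_rfl (by linarith)
  have hF00 : Tendsto F (𝓝[≠] (0:ℝ)) (𝓝 0) := aux_tendsto_F_zero hgc (hgd 0) h0
  have hF0r : Tendsto F (𝓝[>] (0:ℝ)) (𝓝 0) :=
    hF00.mono_left (nhdsWithin_mono 0 fun x (hx : x ∈ Set.Ioi (0:ℝ)) =>
      (by exact ne_of_gt hx : x ≠ 0))
  have hF0l : Tendsto F (𝓝[<] (0:ℝ)) (𝓝 0) :=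
    hF00.mono_left (nhdsWithin_mono 0 fun x (hx : x ∈ Set.Iio (0:ℝ)) =>
      (by exact ne_of_lt hx : x ≠ 0))
  have hcont_half_cos : Continuous fun x : ℝ => Real.cos (x / 2) :=
    Real.continuous_cos.comp (continuous_id.div_const 2)
  have hcont_half_sin : Continuous fun x : ℝ => Real.sin (x / 2) :=
    Real.continuous_sin.comp (continuous_id.div_const 2)
  have hFπ : Tendsto F (𝓝[<] π) (𝓝 0) := by
    have hs : Real.sin (π / 2) ≠ 0 := by rw [Real.sin_pi_div_two]; norm_num
    have hcont : ContinuousAt F π :=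
      (hcont_half_cos.continuousAt.div hcont_half_sin.continuousAt hs).mul
        ((hgc.pow 2).continuousAt)
    have hFv : F π = 0 := by simp [hF, Real.cos_pi_div_two]
    rw [← hFv]
    exact hcont.continuousWithinAt
  have hFmπ : Tendsto F (𝓝[>] (-π)) (𝓝 0) := by
    have hs : Real.sin (-π / 2) ≠ 0 := by
      rw [show -π / 2 = -(π / 2) by ring, Real.sin_neg, Real.sin_pi_div_two]; norm_num
    have hcont : ContinuousAt F (-π) :=
      (hcont_half_cos.continuousAt.div hcont_half_sin.continuousAt hs).mul
        ((hgc.pow 2).continuousAt)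
    have hFv : F (-π) = 0 := by
      simp [hF, show -π / 2 = -(π / 2) by ring, Real.cos_neg, Real.cos_pi_div_two]
    rw [← hFv]
    exact hcont.continuousWithinAt
  have hI1 : ∫ x in (0:ℝ)..π,
      (u x - 1 / 2 * (g x ^ 2 / Real.sin (x / 2) ^ 2)) = 0 := by
    rw [integral_eq_sub_of_hasDerivAt_of_tendsto hπ
      (fun x hx => hderiv x (aux_sin_half_ne (by linarith [hx.1]) (le_of_lt hx.2)
        (ne_of_gt hx.1)))
      (hE_int 0 π hsub1) hF0r hFπ]
    ring
  have hI2 : ∫ x in (-π)..(0:ℝ),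
      (u x - 1 / 2 * (g x ^ 2 / Real.sin (x / 2) ^ 2)) = 0 := by
    rw [integral_eq_sub_of_hasDerivAt_of_tendsto (by linarith : -π < (0:ℝ))
      (fun x hx => hderiv x (aux_sin_half_ne (le_of_lt hx.1) (by linarith [hx.2])
        (ne_of_lt hx.2)))
      (hE_int (-π) 0 hsub2) hFmπ hF0l]
    ring
  have htot : ∫ x in (-π)..π,
      (u x - 1 / 2 * (g x ^ 2 / Real.sin (x / 2) ^ 2)) = 0 := by
    rw [← integral_add_adjacent_intervals (hE_int (-π) 0 hsub2) (hE_int 0 π hsub1),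
      hI1, hI2]
    ring
  have hu_val : ∫ x in (-π)..π, u x
      = 1 / 2 * ∫ x in (-π)..π, g x ^ 2 / Real.sin (x / 2) ^ 2 := by
    rw [integral_sub hu_int (hint.const_mul (1 / 2))] at htot
    rw [intervalIntegral.integral_const_mul] at htot
    linarith
  -- the v part
  have hv_ae : ∀ᵐ x ∂(volume : Measure ℝ),
      v x = -4 * (k x * Real.cos (x / 2) ^ 2) := by
    have hzero : (volume : Measure ℝ) {x : ℝ | Real.sin (x / 2) = 0} = 0 := by
      refine measure_mono_null (fun x hx => ?_)
        ((Set.countable_range fun n : ℤ => (n : ℝ) * π * 2).measure_zero _)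
      obtain ⟨n, hn⟩ := Real.sin_eq_zero_iff.mp hx
      refine ⟨n, ?_⟩
      show (n : ℝ) * π * 2 = x
      linarith
    rw [ae_iff]
    apply measure_mono_null _ hzero
    intro x hx
    simp only [Set.mem_setOf_eq] at hx ⊢
    by_contra h
    apply hx
    simp only [hv]
    rw [aux_sin_double x]
    field_simp
    ring
  have hcontv : Continuous fun x => -4 * (k x * Real.cos (x / 2) ^ 2) :=
    continuous_const.mul (hkc.mul (hcont_half_cos.pow 2))
  have hv_int : IntervalIntegrable v volume (-π) π := by
    have hcv := hcontv.intervalIntegrable (-π) π (μ := volume)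
    rw [intervalIntegrable_iff] at hcv ⊢
    exact hcv.congr (ae_restrict_of_ae (hv_ae.mono fun x h => h.symm))
  have hv_val : ∫ x in (-π)..π, v x
      = -4 * ∫ x in (-π)..π, k x * Real.cos (x / 2) ^ 2 := by
    rw [integral_congr_ae (by filter_upwards [hv_ae] with x h; exact fun _ => h)]
    exact integral_const_mul _ _
  -- assemble
  have hsplit : ∀ x : ℝ,
      (-(Real.sin x) * k x) * (g x + b * Real.sin x) / Real.sin (x / 2) ^ 2
        = -u x + b * v x := by
    intro x
    simp only [hu, hv]
    ring
  rw [intervalIntegral.integral_congr (g := fun x => -u x + b * v x)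
    (fun x _ => hsplit x)]
  rw [integral_add (show IntervalIntegrable (fun x => -u x) volume (-π) π from hu_int.neg)
    (hv_int.const_mul b), intervalIntegral.integral_neg, intervalIntegral.integral_const_mul, hu_val, hv_val]
  ring
end

section
/- Let ω : ℝ → ℝ be 2π-periodic and twice continuously differentiable with ∫_{-π}^{π} ω'(x)²/sin²(x/2) dx < ∞ (hence ω'(0) = 0). Then lim_{ε→0⁺} ∫_{ε ≤ |y| ≤ π} cot(y/2) · (d/dy)(sin(y) ω'(y)) dy = ∫_{-π}^{π} cot(y/2) ω'(y) dy, the right-hand integral being absolutely convergent, and moreover | ∫_{-π}^{π} cot(y/2) ω'(y) dy | ≤ √π ( ∫_{-π}^{π} ω'(y)²/sin²(y/2) dy )^{1/2}. -/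
open Real MeasureTheory intervalIntegral

private lemma sin_double_half (y : ℝ) :
    Real.sin y = 2 * Real.sin (y / 2) * Real.cos (y / 2) := by
  conv_lhs => rw [show y = 2 * (y / 2) by ring]
  exact Real.sin_two_mul (y / 2)

private lemma cot_half_hasDerivAt {x : ℝ} (hs : Real.sin (x / 2) ≠ 0) :
    HasDerivAt (fun y => Real.cot (y / 2)) (-(1 / (2 * Real.sin (x / 2) ^ 2))) x := by
  have h2 : HasDerivAt (fun y : ℝ => y / 2) (1 / 2) x := (hasDerivAt_id x).div_const 2
  have hcos := h2.cos
  have hsin := h2.sin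
  have hdiv := hcos.div hsin hs
  have hfun : (fun y : ℝ => Real.cos (y / 2) / Real.sin (y / 2))
      = fun y => Real.cot (y / 2) := by
    funext y; rw [Real.cot_eq_cos_div_sin]
  rw [show ((fun x : ℝ => Real.cos (x / 2)) / fun x => Real.sin (x / 2)) = fun y => Real.cot (y / 2) from hfun] at hdiv
  refine hdiv.congr_deriv ?_
  have hpy := Real.sin_sq_add_cos_sq (x / 2)
  rw [show (-Real.sin (x / 2) * (1 / 2) * Real.sin (x / 2) - Real.cos (x / 2) * (Real.cos (x / 2) * (1 / 2))) = -(1 / 2) by nlinarith [hpy]]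
  ring

private lemma cot_half_mul_sin {y : ℝ} (hs : Real.sin (y / 2) ≠ 0) (w : ℝ) :
    Real.cot (y / 2) * (Real.sin y * w) = 2 * Real.cos (y / 2) ^ 2 * w := by
  rw [Real.cot_eq_cos_div_sin, sin_double_half y]
  field_simp

private lemma cot_half_integrand {y : ℝ} (hs : Real.sin (y / 2) ≠ 0) (w : ℝ) :
    -(1 / (2 * Real.sin (y / 2) ^ 2)) * (Real.sin y * w) = -(Real.cot (y / 2) * w) := by
  rw [Real.cot_eq_cos_div_sin, sin_double_half y]
  field_simp

private lemma ibp_aux (ω : ℝ → ℝ) (hω : ContDiff ℝ 2 ω) (a b : ℝ)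
    (hs : ∀ x ∈ Set.uIcc a b, Real.sin (x / 2) ≠ 0) :
    ∫ y in a..b, Real.cot (y / 2) * deriv (fun z => Real.sin z * deriv ω z) y
      = Real.cot (b / 2) * (Real.sin b * deriv ω b)
        - Real.cot (a / 2) * (Real.sin a * deriv ω a)
        + ∫ y in a..b, Real.cot (y / 2) * deriv ω y := by
  have hω2 : ContDiff ℝ (1 + 1) ω := by rw [one_add_one_eq_two]; exact hω
  have hd1 : ContDiff ℝ 1 (deriv ω) := (contDiff_succ_iff_deriv.mp hω2).2.2
  have hdd : Differentiable ℝ (deriv ω) := hd1.differentiable one_ne_zero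
  have hd01 : ContDiff ℝ (0 + 1) (deriv ω) := by rw [zero_add]; exact hd1
  have hdd_cont : Continuous (deriv (deriv ω)) :=
    (contDiff_succ_iff_deriv.mp hd01).2.2.continuous
  have hdω_cont : Continuous (deriv ω) := hd1.continuous
  set g' : ℝ → ℝ := fun z => Real.cos z * deriv ω z + Real.sin z * deriv (deriv ω) z with hg'
  have hg : ∀ x, HasDerivAt (fun z => Real.sin z * deriv ω z) (g' x) x := fun x =>
    (Real.hasDerivAt_sin x).mul (hdd x).hasDerivAt
  have hderiv_g : deriv (fun z => Real.sin z * deriv ω z) = g' := funext fun x => (hg x).deriv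
  have hg'_cont : Continuous g' :=
    (Real.continuous_cos.mul hdω_cont).add (Real.continuous_sin.mul hdd_cont)
  set c' : ℝ → ℝ := fun y => -(1 / (2 * Real.sin (y / 2) ^ 2)) with hc'
  have hc'_contOn : ContinuousOn c' (Set.uIcc a b) := by
    apply ContinuousOn.neg
    apply ContinuousOn.div continuousOn_const
    · exact (continuous_const.mul
        ((Real.continuous_sin.comp (continuous_id.div_const 2)).pow 2)).continuousOn
    · intro x hx
      exact mul_ne_zero two_ne_zero (pow_ne_zero 2 (hs x hx))
  have hibp := intervalIntegral.integral_mul_deriv_eq_deriv_mul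
    (u := fun y => Real.cot (y / 2)) (v := fun z => Real.sin z * deriv ω z)
    (u' := c') (v' := g')
    (fun x hx => cot_half_hasDerivAt (hs x hx))
    (fun x hx => hg x)
    (hc'_contOn.intervalIntegrable)
    (hg'_cont.intervalIntegrable a b)
  rw [hderiv_g, hibp]
  have hcongr : ∫ y in a..b, c' y * (Real.sin y * deriv ω y)
      = ∫ y in a..b, -(Real.cot (y / 2) * deriv ω y) := by
    apply intervalIntegral.integral_congr
    intro y hy
    exact cot_half_integrand (hs y hy) (deriv ω y)
  rw [hcongr, intervalIntegral.integral_neg]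
  ring

theorem stmt17 (ω : ℝ → ℝ) (hper : Function.Periodic ω (2 * π)) (hω : ContDiff ℝ 2 ω)
    (hint : IntervalIntegrable (fun x => (deriv ω x) ^ 2 / (Real.sin (x / 2)) ^ 2)
      volume (-π) π) :
    IntervalIntegrable (fun y => Real.cot (y / 2) * deriv ω y) volume (-π) π ∧
    Filter.Tendsto (fun ε =>
        (∫ y in ε..π, Real.cot (y / 2) * deriv (fun z => Real.sin z * deriv ω z) y) +
        ∫ y in (-π)..(-ε), Real.cot (y / 2) * deriv (fun z => Real.sin z * deriv ω z) y)
      (nhdsWithin 0 (Set.Ioi 0))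
      (nhds (∫ y in (-π)..π, Real.cot (y / 2) * deriv ω y)) ∧
    |∫ y in (-π)..π, Real.cot (y / 2) * deriv ω y|
      ≤ Real.sqrt π * Real.sqrt (∫ y in (-π)..π, (deriv ω y) ^ 2 / (Real.sin (y / 2)) ^ 2) := by
  have hπ := Real.pi_pos
  have hle : (-π : ℝ) ≤ π := by linarith
  have hω2 : ContDiff ℝ (1 + 1) ω := by rw [one_add_one_eq_two]; exact hω
  have hd1 : ContDiff ℝ 1 (deriv ω) := (contDiff_succ_iff_deriv.mp hω2).2.2
  have hdω_cont : Continuous (deriv ω) := hd1.continuous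
  set μ : Measure ℝ := volume.restrict (Set.Ioc (-π) π) with hμ
  have hfin : IsFiniteMeasure μ :=
    ⟨by rw [hμ, Measure.restrict_apply_univ]; exact measure_Ioc_lt_top⟩
  have hgg_meas : AEStronglyMeasurable (fun y => deriv ω y / Real.sin (y / 2)) μ :=
    (hdω_cont.measurable.div
      (Real.measurable_sin.comp (measurable_id.div_const 2))).aestronglyMeasurable
  have hgg2 : Integrable (fun y => (deriv ω y / Real.sin (y / 2)) ^ 2) μ := by
    have h := (intervalIntegrable_iff_integrableOn_Ioc_of_le hle).mp hint
    rw [hμ]; simp only [div_pow]; exact h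
  have hggL2 : MemLp (fun y => deriv ω y / Real.sin (y / 2)) 2 μ :=
    (memLp_two_iff_integrable_sq hgg_meas).mpr hgg2
  have hgg1 : Integrable (fun y => deriv ω y / Real.sin (y / 2)) μ :=
    hggL2.integrable (by norm_num)
  have hcos_cont : Continuous (fun y : ℝ => Real.cos (y / 2)) :=
    Real.continuous_cos.comp (continuous_id.div_const 2)
  have hprod : Integrable (fun y => Real.cos (y / 2) * (deriv ω y / Real.sin (y / 2))) μ :=
    hgg1.bdd_mul hcos_cont.aestronglyMeasurable
      (c := 1) (ae_of_all _ fun y => by simpa [Real.norm_eq_abs] using Real.abs_cos_le_one (y / 2))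
  have heqfun : (fun y => Real.cot (y / 2) * deriv ω y)
      = fun y => Real.cos (y / 2) * (deriv ω y / Real.sin (y / 2)) := by
    funext y
    rw [Real.cot_eq_cos_div_sin, div_mul_eq_mul_div, mul_div_assoc]
  have hI : IntervalIntegrable (fun y => Real.cot (y / 2) * deriv ω y) volume (-π) π := by
    rw [intervalIntegrable_iff_integrableOn_Ioc_of_le hle, heqfun]
    exact hprod
  refine ⟨hI, ?_, ?_⟩
  · -- the limit
    set f : ℝ → ℝ := fun y => Real.cot (y / 2) * deriv ω y with hf
    set F : ℝ → ℝ := fun b => ∫ y in (-π)..b, f y with hF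
    have hFc : ContinuousWithinAt F (Set.Icc (-π) π) 0 := by
      apply intervalIntegral.continuousWithinAt_primitive (measure_singleton 0)
      rw [min_self, max_eq_right hle]
      exact hI
    have hIoo : Set.Ioo (0 : ℝ) π ∈ nhdsWithin (0 : ℝ) (Set.Ioi 0) :=
      Ioo_mem_nhdsGT_of_mem ⟨le_refl 0, hπ⟩
    have hmap : Filter.Tendsto (fun ε : ℝ => ε) (nhdsWithin 0 (Set.Ioi 0))
        (nhdsWithin 0 (Set.Icc (-π) π)) := by
      apply tendsto_nhdsWithin_of_tendsto_nhds_of_eventually_within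
      · exact Filter.tendsto_id.mono_left nhdsWithin_le_nhds
      · filter_upwards [hIoo] with ε hε
        exact ⟨by linarith [hε.1], le_of_lt hε.2⟩
    have hmapneg : Filter.Tendsto (fun ε : ℝ => -ε) (nhdsWithin 0 (Set.Ioi 0))
        (nhdsWithin 0 (Set.Icc (-π) π)) := by
      apply tendsto_nhdsWithin_of_tendsto_nhds_of_eventually_within
      · have h0 : Filter.Tendsto (fun ε : ℝ => -ε) (nhds 0) (nhds (-(0:ℝ))) :=
          (continuous_neg.tendsto 0)
        rw [neg_zero] at h0
        exact h0.mono_left nhdsWithin_le_nhds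
      · filter_upwards [hIoo] with ε hε
        exact ⟨by linarith [hε.2], by linarith [hε.1]⟩
    have h1 : Filter.Tendsto (fun ε : ℝ => F ε) (nhdsWithin 0 (Set.Ioi 0)) (nhds (F 0)) :=
      hFc.tendsto.comp hmap
    have h2 : Filter.Tendsto (fun ε : ℝ => F (-ε)) (nhdsWithin 0 (Set.Ioi 0)) (nhds (F 0)) :=
      hFc.tendsto.comp hmapneg
    have hT1 : Filter.Tendsto
        (fun ε : ℝ => 2 * Real.cos (ε / 2) ^ 2 * (deriv ω (-ε) - deriv ω ε)) (nhds 0) (nhds 0) := by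
      have hcont : Continuous
          (fun ε : ℝ => 2 * Real.cos (ε / 2) ^ 2 * (deriv ω (-ε) - deriv ω ε)) :=
        (continuous_const.mul (hcos_cont.pow 2)).mul
          ((hdω_cont.comp continuous_neg).sub hdω_cont)
      have h := hcont.tendsto 0
      simpa using h
    have hlim : Filter.Tendsto (fun ε : ℝ => 2 * Real.cos (ε / 2) ^ 2 * (deriv ω (-ε) - deriv ω ε)
          + ((∫ y in (-π)..π, f y) - (F ε - F (-ε))))
        (nhdsWithin 0 (Set.Ioi 0)) (nhds (∫ y in (-π)..π, f y)) := by
      have h := (hT1.mono_left nhdsWithin_le_nhds).add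
        (Filter.Tendsto.sub (tendsto_const_nhds (x := ∫ y in (-π)..π, f y)) (h1.sub h2))
      simpa using h
    refine Filter.Tendsto.congr' ?_ hlim
    filter_upwards [hIoo] with ε hε
    obtain ⟨hε0, hεπ⟩ := hε
    have hsub1 : ∀ x ∈ Set.uIcc ε π, Real.sin (x / 2) ≠ 0 := by
      intro x hx
      rw [Set.uIcc_of_le (le_of_lt hεπ)] at hx
      exact (Real.sin_pos_of_pos_of_lt_pi (by linarith [hx.1]) (by linarith [hx.2])).ne'
    have hsub2 : ∀ x ∈ Set.uIcc (-π) (-ε), Real.sin (x / 2) ≠ 0 := by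
      intro x hx
      rw [Set.uIcc_of_le (by linarith : (-π : ℝ) ≤ -ε)] at hx
      have hpos := Real.sin_pos_of_pos_of_lt_pi
        (show (0:ℝ) < -(x / 2) by linarith [hx.2]) (by linarith [hx.1])
      rw [Real.sin_neg] at hpos
      exact ne_of_lt (by linarith)
    have hibp1 := ibp_aux ω hω ε π hsub1
    have hibp2 := ibp_aux ω hω (-π) (-ε) hsub2
    have hsε : Real.sin (ε / 2) ≠ 0 := hsub1 ε Set.left_mem_uIcc
    have hb1 : Real.cot (π / 2) * (Real.sin π * deriv ω π) = 0 := by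
      rw [Real.sin_pi]; ring
    have hb2 : Real.cot ((-π) / 2) * (Real.sin (-π) * deriv ω (-π)) = 0 := by
      rw [Real.sin_neg, Real.sin_pi]; ring
    have hbε : Real.cot (ε / 2) * (Real.sin ε * deriv ω ε)
        = 2 * Real.cos (ε / 2) ^ 2 * deriv ω ε := cot_half_mul_sin hsε _
    have hsnegε : Real.sin ((-ε) / 2) ≠ 0 := by
      rw [neg_div, Real.sin_neg]
      simpa using hsε
    have hbnegε : Real.cot ((-ε) / 2) * (Real.sin (-ε) * deriv ω (-ε))
        = 2 * Real.cos (ε / 2) ^ 2 * deriv ω (-ε) := by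
      have h := cot_half_mul_sin hsnegε (deriv ω (-ε))
      rw [neg_div, Real.cos_neg] at h
      rw [neg_div]
      exact h
    have hIa : IntervalIntegrable f volume (-π) (-ε) := hI.mono_set (by
      rw [Set.uIcc_of_le hle, Set.uIcc_of_le (by linarith : (-π : ℝ) ≤ -ε)]
      exact Set.Icc_subset_Icc le_rfl (by linarith))
    have hIb : IntervalIntegrable f volume (-ε) ε := hI.mono_set (by
      rw [Set.uIcc_of_le hle, Set.uIcc_of_le (by linarith : (-ε : ℝ) ≤ ε)]
      exact Set.Icc_subset_Icc (by linarith) (by linarith))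
    have hIc : IntervalIntegrable f volume (-π) ε := hI.mono_set (by
      rw [Set.uIcc_of_le hle, Set.uIcc_of_le (by linarith : (-π : ℝ) ≤ ε)]
      exact Set.Icc_subset_Icc le_rfl (by linarith))
    have hId : IntervalIntegrable f volume ε π := hI.mono_set (by
      rw [Set.uIcc_of_le hle, Set.uIcc_of_le (le_of_lt hεπ)]
      exact Set.Icc_subset_Icc (by linarith) le_rfl)
    have hadd1 := intervalIntegral.integral_add_adjacent_intervals hIa hIb
    have hadd2 := intervalIntegral.integral_add_adjacent_intervals hIc hId
    have hFε : F ε = ∫ y in (-π)..ε, f y := rfl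
    have hFnegε : F (-ε) = ∫ y in (-π)..(-ε), f y := rfl
    rw [hibp1, hibp2, hb1, hb2, hbε, hbnegε, hFε, hFnegε]
    linarith [hadd1, hadd2]
  · -- Cauchy–Schwarz bound
    have hnorm_eq : ∀ x : ℝ, ‖x‖ ^ (2 : ℝ) = x ^ 2 := fun x => by
      rw [show (2 : ℝ) = ((2 : ℕ) : ℝ) by norm_num, Real.rpow_natCast, Real.norm_eq_abs, sq_abs]
    have hcosL2 : MemLp (fun y : ℝ => Real.cos (y / 2)) 2 μ := by
      apply (memLp_two_iff_integrable_sq hcos_cont.aestronglyMeasurable).mpr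
      exact (hcos_cont.pow 2).integrableOn_Ioc
    have hpq : (2 : ℝ).HolderConjugate 2 := Real.HolderConjugate.two_two
    have h2of : ENNReal.ofReal (2 : ℝ) = 2 := by
      rw [ENNReal.ofReal_ofNat]
    have hCS := MeasureTheory.integral_mul_norm_le_Lp_mul_Lq (μ := μ) hpq
      (f := fun y : ℝ => Real.cos (y / 2)) (g := fun y => deriv ω y / Real.sin (y / 2))
      (by rw [h2of]; exact hcosL2) (by rw [h2of]; exact hggL2)
    have hAval : (∫ y, ‖Real.cos (y / 2)‖ ^ (2 : ℝ) ∂μ) = π := by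
      simp_rw [hnorm_eq]
      rw [hμ, show (∫ y in Set.Ioc (-π) π, Real.cos (y / 2) ^ 2)
        = ∫ y in (-π)..π, Real.cos (y / 2) ^ 2 from (intervalIntegral.integral_of_le hle).symm]
      have hcs : ∀ y : ℝ, Real.cos (y / 2) ^ 2 = 1 / 2 + Real.cos y / 2 := fun y => by
        rw [Real.cos_sq, show 2 * (y / 2) = y by ring]
      simp_rw [hcs]
      rw [intervalIntegral.integral_add intervalIntegrable_const
        ((intervalIntegral.intervalIntegrable_cos).div_const 2)]
      simp [integral_cos, Real.sin_pi, Real.sin_neg]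
      ring
    have hBval : (∫ y, ‖deriv ω y / Real.sin (y / 2)‖ ^ (2 : ℝ) ∂μ)
        = ∫ y in (-π)..π, (deriv ω y) ^ 2 / (Real.sin (y / 2)) ^ 2 := by
      simp_rw [hnorm_eq, div_pow]
      rw [hμ, intervalIntegral.integral_of_le hle]
    calc |∫ y in (-π)..π, Real.cot (y / 2) * deriv ω y|
        ≤ ∫ y in (-π)..π, |Real.cot (y / 2) * deriv ω y| :=
          intervalIntegral.abs_integral_le_integral_abs hle
      _ = ∫ y, ‖Real.cos (y / 2)‖ * ‖deriv ω y / Real.sin (y / 2)‖ ∂μ := by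
          rw [intervalIntegral.integral_of_le hle, hμ]
          congr 1
          funext y
          rw [Real.cot_eq_cos_div_sin, div_mul_eq_mul_div, mul_div_assoc,
            Real.norm_eq_abs, Real.norm_eq_abs, abs_mul]
      _ ≤ (∫ y, ‖Real.cos (y / 2)‖ ^ (2:ℝ) ∂μ) ^ (1 / (2:ℝ))
            * (∫ y, ‖deriv ω y / Real.sin (y / 2)‖ ^ (2:ℝ) ∂μ) ^ (1 / (2:ℝ)) := hCS
      _ = Real.sqrt π * Real.sqrt (∫ y in (-π)..π, (deriv ω y) ^ 2 / (Real.sin (y / 2)) ^ 2) := by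
          rw [hAval, hBval, ← Real.sqrt_eq_rpow, ← Real.sqrt_eq_rpow]
end
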